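/- arXiv:1805.03851 — 4 statements merged into one kernel-verified Lean document; each statement's English description precedes it below -/
import Mathlib

section
/- Edge and cell moments of the quartic bubbles ψ_i = λ_i Λ (i = 1,2,3): for all i, k ∈ {1,2,3}, ⨍_{e_k} ∂_n ψ_i = 0 if k ≡ i (mod 3) and = −(1/12)‖∇λ_k‖ if k ≢ i (mod 3); moreover ⨍_T λ_k ψ_i = 12/7! = 1/420 if k ≡ i (mod 3) and = 8/7! = 1/630 if k ≢ i (mod 3). -/
open MeasureTheory
open scoped RealInnerProductSpace ENNReal NNReal

noncomputable section

/-- Points of the plane `ℝ²`. -/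
abbrev Pt := EuclideanSpace ℝ (Fin 2)

/-- `p : ℝ² → ℝ` is a real polynomial function of total degree at most `k`. -/
def IsPolyDeg (k : ℕ) (p : Pt → ℝ) : Prop :=
  ∃ q : MvPolynomial (Fin 2) ℝ, q.totalDegree ≤ k ∧
    ∀ x : Pt, p x = MvPolynomial.eval (fun j => x j) q

/-- Average of `f` over the edge `e_i` (the segment from `a (i+1)` to `a (i+2)`,
opposite the vertex `a i`) with respect to the 1-dimensional Hausdorff measure. -/
def edgeAvg (a : Fin 3 → Pt) (i : Fin 3) (f : Pt → ℝ) : ℝ :=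
  ⨍ x in segment ℝ (a (i+1)) (a (i+2)), f x ∂(μH[1])

/-- Average of `f` over the triangle `T` (the convex hull of the vertices)
with respect to the 2-dimensional Lebesgue measure. -/
def triAvg (a : Fin 3 → Pt) (f : Pt → ℝ) : ℝ :=
  ⨍ x in convexHull ℝ (Set.range a), f x

/-- The normal derivative `∂ₙ v = ∇v ⬝ n_i` on the edge `e_i`, where
`n_i = -∇λ_i / ‖∇λ_i‖` and `g i = ∇λ_i`. -/
def nderiv (g : Fin 3 → Pt) (i : Fin 3) (v : Pt → ℝ) (x : Pt) : ℝ :=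
  ⟪gradient v x, -(‖g i‖⁻¹ • g i)⟫

/-- The quartic bubbles `ψ_i = λ_i Λ`, `Λ = λ₁λ₂λ₃`. -/
def psiQ (lam : Fin 3 → Pt → ℝ) (i : Fin 3) (x : Pt) : ℝ :=
  lam i x * (lam 0 x * lam 1 x * lam 2 x)

lemma seg_measure_eq (p q : Pt) :
    (μH[1] : Measure Pt).restrict (segment ℝ p q)
      = Measure.map (AffineMap.lineMap p q)
          (((nndist p q : ℝ≥0∞)) • (volume : Measure ℝ).restrict (Set.Icc 0 1)) := by
  have hγ : Measurable (AffineMap.lineMap p q : ℝ → Pt) :=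
    (AffineMap.lineMap p q : ℝ →ᵃ[ℝ] Pt).continuous_of_finiteDimensional.measurable
  refine Measure.ext fun s hs => ?_
  rw [Measure.map_apply hγ hs, Measure.restrict_apply hs, Measure.smul_apply,
    Measure.restrict_apply (hγ hs)]
  have himg : s ∩ segment ℝ p q
      = (AffineMap.lineMap p q : ℝ → Pt) '' ((AffineMap.lineMap p q : ℝ → Pt) ⁻¹' s ∩ Set.Icc 0 1) := by
    rw [Set.image_preimage_inter, ← segment_eq_image_lineMap]
  rw [himg, hausdorffMeasure_lineMap_image, hausdorffMeasure_real]
  rfl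


lemma seg_avg_eq (p q : Pt) (hpq : p ≠ q) (f : Pt → ℝ) (hf : Continuous f) :
    (⨍ x in segment ℝ p q, f x ∂(μH[1] : Measure Pt))
      = ∫ t in Set.Icc (0:ℝ) 1, f (AffineMap.lineMap p q t) := by
  have hγ : Measurable (AffineMap.lineMap p q : ℝ → Pt) :=
    (AffineMap.lineMap p q : ℝ →ᵃ[ℝ] Pt).continuous_of_finiteDimensional.measurable
  have hseg : (μH[1] : Measure Pt) (segment ℝ p q) = edist p q := hausdorffMeasure_segment p q
  rw [setAverage_eq, measureReal_def, ← Measure.restrict_apply_univ, seg_measure_eq p q]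
  rw [integral_map hγ.aemeasurable hf.aestronglyMeasurable]
  rw [integral_smul_measure, Measure.map_apply hγ MeasurableSet.univ]
  simp only [Set.preimage_univ, Measure.smul_apply, Measure.restrict_apply MeasurableSet.univ,
    Set.univ_inter, Real.volume_Icc, sub_zero, ENNReal.ofReal_one, smul_eq_mul, mul_one]
  have hd : (0:ℝ) < dist p q := dist_pos.mpr hpq
  rw [ENNReal.coe_toReal, coe_nndist, ← mul_assoc, inv_mul_cancel₀ hd.ne', one_mul]


lemma lam_lineMap {g : Fin 3 → Pt} {c : Fin 3 → ℝ} {lam : Fin 3 → Pt → ℝ}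
    (hlam : ∀ i x, lam i x = ⟪g i, x⟫ + c i) (j : Fin 3) (p q : Pt) (t : ℝ) :
    lam j (AffineMap.lineMap p q t) = lam j p + t * (lam j q - lam j p) := by
  rw [AffineMap.lineMap_apply_module, hlam, hlam, hlam, inner_add_right,
    real_inner_smul_right, real_inner_smul_right]
  ring

lemma int_poly1 : ∫ t in (0:ℝ)..1, (1-t)*((1-t)*t) = 1/12 := by
  have h : ∀ t : ℝ, HasDerivAt (fun s : ℝ => s^2/2 - 2*s^3/3 + s^4/4)
      ((1-t)*((1-t)*t)) t := by
    intro t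
    have := (((hasDerivAt_pow 2 t).div_const 2).sub
      (((hasDerivAt_pow 3 t).const_mul 2).div_const 3)).add ((hasDerivAt_pow 4 t).div_const 4)
    refine (this).congr_deriv ?_
    ring
  rw [intervalIntegral.integral_eq_sub_of_hasDerivAt (fun t _ => h t)
    (by apply Continuous.intervalIntegrable; continuity)]
  norm_num

lemma int_poly2 : ∫ t in (0:ℝ)..1, t*((1-t)*t) = 1/12 := by
  have h : ∀ t : ℝ, HasDerivAt (fun s : ℝ => s^3/3 - s^4/4) (t*((1-t)*t)) t := by
    intro t
    have := ((hasDerivAt_pow 3 t).div_const 3).sub ((hasDerivAt_pow 4 t).div_const 4)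
    refine (this).congr_deriv ?_
    ring
  rw [intervalIntegral.integral_eq_sub_of_hasDerivAt (fun t _ => h t)
    (by apply Continuous.intervalIntegrable; continuity)]
  norm_num


lemma inner_gradient_eq {v : Pt → ℝ} {D : Pt →L[ℝ] ℝ} {x : Pt} (h : HasFDerivAt v D x) (w : Pt) :
    ⟪gradient v x, w⟫ = D w := by
  rw [gradient, h.fderiv, InnerProductSpace.toDual_symm_apply]

lemma lam_hasFDerivAt {g : Fin 3 → Pt} {c : Fin 3 → ℝ} {lam : Fin 3 → Pt → ℝ}
    (hlam : ∀ i x, lam i x = ⟪g i, x⟫ + c i) (j : Fin 3) (x : Pt) :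
    HasFDerivAt (lam j) (innerSL ℝ (g j)) x := by
  have : lam j = fun y => ⟪g j, y⟫ + c j := funext fun y => hlam j y
  rw [this]
  simpa using ((innerSL ℝ (g j)).hasFDerivAt (x := x)).add_const (c j)

lemma nderiv_psiQ {g : Fin 3 → Pt} {c : Fin 3 → ℝ} {lam : Fin 3 → Pt → ℝ}
    (hlam : ∀ i x, lam i x = ⟪g i, x⟫ + c i) (i k : Fin 3) (x : Pt) :
    nderiv g k (psiQ lam i) x =
      -‖g k‖⁻¹ * (⟪g i, g k⟫ * (lam 0 x * lam 1 x * lam 2 x)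
        + lam i x * (⟪g 0, g k⟫ * (lam 1 x * lam 2 x)
          + ⟪g 1, g k⟫ * (lam 0 x * lam 2 x)
          + ⟪g 2, g k⟫ * (lam 0 x * lam 1 x))) := by
  have h0 := lam_hasFDerivAt hlam 0 x
  have h1 := lam_hasFDerivAt hlam 1 x
  have h2 := lam_hasFDerivAt hlam 2 x
  have hi := lam_hasFDerivAt hlam i x
  have hprod := (h0.mul h1).mul h2
  have hpsi := hi.mul hprod
  have heq : psiQ lam i = fun y => lam i y * (lam 0 y * lam 1 y * lam 2 y) := rfl
  rw [nderiv, heq, inner_gradient_eq (v := fun y => lam i y * (lam 0 y * lam 1 y * lam 2 y)) hpsi]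
  simp only [ContinuousLinearMap.add_apply, ContinuousLinearMap.coe_smul', Pi.smul_apply,
    innerSL_apply_apply, smul_eq_mul, Pi.mul_apply, inner_neg_right, inner_smul_right, real_inner_comm]
  ring


lemma nderiv_on_edge {g : Fin 3 → Pt} {c : Fin 3 → ℝ} {lam : Fin 3 → Pt → ℝ}
    (hlam : ∀ i x, lam i x = ⟪g i, x⟫ + c i) (i k : Fin 3) (x : Pt)
    (h0 : lam k x = 0) :
    nderiv g k (psiQ lam i) x = -‖g k‖ * (lam i x * (lam (k+1) x * lam (k+2) x)) := by
  have hn : -‖g k‖⁻¹ * ⟪g k, g k⟫ = -‖g k‖ := by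
    rw [real_inner_self_eq_norm_sq]
    rcases eq_or_ne (‖g k‖) 0 with h | h
    · simp [h]
    · field_simp
  rw [nderiv_psiQ hlam]
  fin_cases k <;>
    (simp only [Fin.isValue, Fin.zero_eta, Fin.mk_one, Fin.reduceFinMk, Fin.reduceAdd] at h0 hn ⊢) <;>
    rw [h0] <;>
    [linear_combination (lam i x * (lam 1 x * lam 2 x)) * hn;
     linear_combination (lam i x * (lam 2 x * lam 0 x)) * hn;
     linear_combination (lam i x * (lam 0 x * lam 1 x)) * hn]


lemma edge_moments (a : Fin 3 → Pt) (ha : AffineIndependent ℝ a)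
    (g : Fin 3 → Pt) (c : Fin 3 → ℝ) (lam : Fin 3 → Pt → ℝ)
    (hlam : ∀ i x, lam i x = ⟪g i, x⟫ + c i)
    (hdual : ∀ i j, lam i (a j) = if i = j then 1 else 0) (i k : Fin 3) :
    edgeAvg a k (nderiv g k (psiQ lam i)) = if k = i then 0 else -(1/12) * ‖g k‖ := by
  have h12 : ∀ m : Fin 3, m ≠ m + 1 ∧ m ≠ m + 2 ∧ m + 1 ≠ m + 2 := by decide
  have hne : a (k+1) ≠ a (k+2) := fun h => (h12 k).2.2 (ha.injective h)
  have hlc : ∀ j, Continuous (lam j) := by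
    intro j
    have : lam j = fun x => ⟪g j, x⟫ + c j := funext (hlam j)
    rw [this]
    exact (continuous_const.inner continuous_id).add continuous_const
  have hcont : Continuous (nderiv g k (psiQ lam i)) := by
    have : nderiv g k (psiQ lam i) = fun x =>
        -‖g k‖⁻¹ * (⟪g i, g k⟫ * (lam 0 x * lam 1 x * lam 2 x)
        + lam i x * (⟪g 0, g k⟫ * (lam 1 x * lam 2 x)
          + ⟪g 1, g k⟫ * (lam 0 x * lam 2 x)
          + ⟪g 2, g k⟫ * (lam 0 x * lam 1 x))) := funext (nderiv_psiQ hlam i k)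
    rw [this]
    exact continuous_const.mul ((continuous_const.mul (((hlc 0).mul (hlc 1)).mul (hlc 2))).add
      ((hlc i).mul (((continuous_const.mul ((hlc 1).mul (hlc 2))).add
        (continuous_const.mul ((hlc 0).mul (hlc 2)))).add
        (continuous_const.mul ((hlc 0).mul (hlc 1))))))
  -- values of lam along the edge
  set γ : ℝ → Pt := fun t => AffineMap.lineMap (a (k+1)) (a (k+2)) t with hγ
  have vk : ∀ t, lam k (γ t) = 0 := by
    intro t
    rw [hγ, lam_lineMap hlam, hdual, hdual, if_neg (h12 k).1, if_neg (h12 k).2.1]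
    ring
  have vk1 : ∀ t, lam (k+1) (γ t) = 1 - t := by
    intro t
    rw [hγ, lam_lineMap hlam, hdual, hdual, if_pos rfl, if_neg (h12 k).2.2]
    ring
  have vk2 : ∀ t, lam (k+2) (γ t) = t := by
    intro t
    have : (k+1 : Fin 3) + 1 = k + 2 := by rw [add_assoc]; rfl
    rw [hγ, lam_lineMap hlam, hdual, hdual, if_pos rfl, if_neg]
    · ring
    · rw [← this]; exact ((h12 (k+1)).1 ∘ Eq.symm)
  rw [edgeAvg, seg_avg_eq _ _ hne _ hcont]
  by_cases hik : k = i
  · rw [if_pos hik]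
    have : ∀ t : ℝ, nderiv g k (psiQ lam i) (γ t) = 0 := by
      intro t
      rw [nderiv_on_edge hlam i k _ (vk t), ← hik, vk t]
      ring
    calc ∫ t in Set.Icc (0:ℝ) 1, nderiv g k (psiQ lam i) (γ t)
        = ∫ _t in Set.Icc (0:ℝ) 1, (0:ℝ) := by
          apply integral_congr_ae
          exact Filter.Eventually.of_forall fun t => this t
      _ = 0 := by simp
  · rw [if_neg hik]
    have hcases : i = k + 1 ∨ i = k + 2 := by
      have : ∀ i k : Fin 3, ¬ k = i → i = k + 1 ∨ i = k + 2 := by decide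
      exact this i k hik
    have hpt : ∀ t : ℝ, nderiv g k (psiQ lam i) (γ t)
        = -‖g k‖ * (lam i (γ t) * ((1-t) * t)) := by
      intro t
      rw [nderiv_on_edge hlam i k _ (vk t), vk1 t, vk2 t]
    rw [integral_congr_ae (Filter.Eventually.of_forall fun t => hpt t)]
    rcases hcases with h | h
    · have : ∀ t : ℝ, -‖g k‖ * (lam i (γ t) * ((1-t)*t)) = -‖g k‖ * ((1-t)*((1-t)*t)) := by
        intro t; rw [h, vk1 t]
      rw [integral_congr_ae (Filter.Eventually.of_forall fun t => this t),
        integral_const_mul, integral_Icc_eq_integral_Ioc,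
        ← intervalIntegral.integral_of_le (zero_le_one), int_poly1]
      ring
    · have : ∀ t : ℝ, -‖g k‖ * (lam i (γ t) * ((1-t)*t)) = -‖g k‖ * (t*((1-t)*t)) := by
        intro t; rw [h, vk2 t]
      rw [integral_congr_ae (Filter.Eventually.of_forall fun t => this t),
        integral_const_mul, integral_Icc_eq_integral_Ioc,
        ← intervalIntegral.integral_of_le (zero_le_one), int_poly2]
      ring


def S2' : Set (ℝ × ℝ) := {p | 0 ≤ p.1 ∧ 0 ≤ p.2 ∧ p.1 + p.2 ≤ 1}

lemma S2closed : IsClosed S2' := by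
  have : S2' = {p : ℝ × ℝ | 0 ≤ p.1} ∩ ({p : ℝ × ℝ | 0 ≤ p.2} ∩ {p : ℝ × ℝ | p.1 + p.2 ≤ 1}) := rfl
  rw [this]
  exact (isClosed_le continuous_const continuous_fst).inter
    ((isClosed_le continuous_const continuous_snd).inter
      (isClosed_le (continuous_fst.add continuous_snd) continuous_const))

lemma S2'_meas : MeasurableSet S2' := S2closed.measurableSet

lemma S2'_compact : IsCompact S2' := by
  refine (isCompact_Icc (a := ((0:ℝ),(0:ℝ))) (b := (1,1))).of_isClosed_subset S2closed ?_
  rintro ⟨x, y⟩ ⟨h1, h2, h3⟩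
  exact ⟨⟨h1, h2⟩, ⟨by dsimp at *; linarith, by dsimp at *; linarith⟩⟩

lemma simplex_fubini (F : ℝ → ℝ → ℝ) (hF : Continuous fun p : ℝ × ℝ => F p.1 p.2) :
    ∫ p in S2', F p.1 p.2 = ∫ x in Set.Icc (0:ℝ) 1, ∫ t in Set.Icc 0 (1-x), F x t := by
  have hInt : IntegrableOn (fun p : ℝ × ℝ => F p.1 p.2) S2' :=
    hF.continuousOn.integrableOn_compact S2'_compact
  rw [← integral_indicator S2'_meas]
  rw [Measure.volume_eq_prod] at *
  rw [integral_prod _ ((integrable_indicator_iff S2'_meas).2 hInt)]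
  have hinner : ∀ x : ℝ, (∫ y, Set.indicator S2' (fun p => F p.1 p.2) (x, y))
      = (Set.Icc (0:ℝ) 1).indicator (fun x => ∫ t in Set.Icc 0 (1-x), F x t) x := by
    intro x
    by_cases hx : 0 ≤ x
    · have hfun : (fun y => Set.indicator S2' (fun p => F p.1 p.2) (x, y))
          = (Set.Icc (0:ℝ) (1-x)).indicator (fun t => F x t) := by
        funext y
        by_cases hy : y ∈ Set.Icc (0:ℝ) (1-x)
        · rw [Set.indicator_of_mem hy]
          have : (x, y) ∈ S2' := ⟨hx, hy.1, by have := hy.2; dsimp; linarith⟩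
          rw [Set.indicator_of_mem this]
        · rw [Set.indicator_of_notMem hy, Set.indicator_of_notMem]
          intro hmem
          exact hy ⟨hmem.2.1, by have := hmem.2.2; dsimp at this ⊢; linarith⟩
      rw [hfun, integral_indicator measurableSet_Icc]
      by_cases hx1 : x ≤ 1
      · rw [Set.indicator_of_mem (Set.mem_Icc.mpr ⟨hx, hx1⟩)]
      · rw [Set.indicator_of_notMem (fun h => hx1 h.2), Set.Icc_eq_empty (by linarith),
          Measure.restrict_empty, integral_zero_measure]
    · have hfun : (fun y => Set.indicator S2' (fun p => F p.1 p.2) (x, y)) = fun _ => (0:ℝ) := by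
        funext y
        exact Set.indicator_of_notMem (fun h => hx h.1) _
      rw [hfun, Set.indicator_of_notMem (fun h => hx h.1)]
      simp
  rw [show (fun x => ∫ y, Set.indicator S2' (fun p => F p.1 p.2) (x, y))
      = (Set.Icc (0:ℝ) 1).indicator (fun x => ∫ t in Set.Icc 0 (1-x), F x t) from funext hinner,
    integral_indicator measurableSet_Icc]


lemma inner311 (x : ℝ) : ∫ t in (0:ℝ)..(1-x), (1-x-t)^3 * x * t = x*(1-x)^5/20 := by
  have h : ∀ t : ℝ, HasDerivAt (fun y : ℝ =>
      x*(1-x)^3/2 * y^2 - x*(1-x)^2 * y^3 + 3*x*(1-x)/4 * y^4 - x/5 * y^5)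
      ((1-x-t)^3 * x * t) t := by
    intro t
    have h2 := (hasDerivAt_pow 2 t).const_mul (x*(1-x)^3/2)
    have h3 := (hasDerivAt_pow 3 t).const_mul (x*(1-x)^2)
    have h4 := (hasDerivAt_pow 4 t).const_mul (3*x*(1-x)/4)
    have h5 := (hasDerivAt_pow 5 t).const_mul (x/5)
    refine (((h2.sub h3).add h4).sub h5).congr_deriv ?_
    push_cast
    ring
  rw [intervalIntegral.integral_eq_sub_of_hasDerivAt (fun t _ => h t)
    (by apply Continuous.intervalIntegrable; fun_prop)]
  ring

lemma outer15 : ∫ x in (0:ℝ)..1, x*(1-x)^5/20 = 1/840 := by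
  have h : ∀ x : ℝ, HasDerivAt (fun y : ℝ =>
      1/40 * y^2 - 1/12 * y^3 + 1/8 * y^4 - 1/10 * y^5 + 1/24 * y^6 - 1/140 * y^7)
      (x*(1-x)^5/20) x := by
    intro x
    have h2 := (hasDerivAt_pow 2 x).const_mul (1/40 : ℝ)
    have h3 := (hasDerivAt_pow 3 x).const_mul (1/12 : ℝ)
    have h4 := (hasDerivAt_pow 4 x).const_mul (1/8 : ℝ)
    have h5 := (hasDerivAt_pow 5 x).const_mul (1/10 : ℝ)
    have h6 := (hasDerivAt_pow 6 x).const_mul (1/24 : ℝ)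
    have h7 := (hasDerivAt_pow 7 x).const_mul (1/140 : ℝ)
    refine (((((h2.sub h3).add h4).sub h5).add h6).sub h7).congr_deriv ?_
    push_cast
    ring
  rw [intervalIntegral.integral_eq_sub_of_hasDerivAt (fun x _ => h x)
    (by apply Continuous.intervalIntegrable; fun_prop)]
  norm_num

lemma J311 : ∫ p in S2', (1-p.1-p.2)^3 * p.1 * p.2 = 1/840 := by
  rw [simplex_fubini (fun s t => (1-s-t)^3 * s * t) (by fun_prop)]
  have hcg : Set.EqOn (fun x : ℝ => ∫ t in Set.Icc 0 (1-x), (1-x-t)^3 * x * t)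
      (fun x : ℝ => x*(1-x)^5/20) (Set.Icc 0 1) := by
    intro x hx
    have hx1 : (0:ℝ) ≤ 1 - x := by have := hx.2; linarith
    show (∫ t in Set.Icc 0 (1-x), (1-x-t)^3 * x * t) = x*(1-x)^5/20
    rw [integral_Icc_eq_integral_Ioc, ← intervalIntegral.integral_of_le hx1, inner311]
  rw [setIntegral_congr_fun measurableSet_Icc hcg, integral_Icc_eq_integral_Ioc,
    ← intervalIntegral.integral_of_le (zero_le_one), outer15]


section inners
variable (x : ℝ)

lemma inner131 : ∫ t in (0:ℝ)..(1-x), (1-x-t) * x^3 * t = x^3*(1-x)^3/6 := by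
  have h : ∀ t : ℝ, HasDerivAt (fun y : ℝ => x^3*(1-x)/2 * y^2 - x^3/3 * y^3)
      ((1-x-t) * x^3 * t) t := by
    intro t
    have h2 := (hasDerivAt_pow 2 t).const_mul (x^3*(1-x)/2)
    have h3 := (hasDerivAt_pow 3 t).const_mul (x^3/3)
    refine (h2.sub h3).congr_deriv ?_
    push_cast; ring
  rw [intervalIntegral.integral_eq_sub_of_hasDerivAt (fun t _ => h t)
    (by apply Continuous.intervalIntegrable; fun_prop)]
  ring

lemma inner113 : ∫ t in (0:ℝ)..(1-x), (1-x-t) * x * t^3 = x*(1-x)^5/20 := by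
  have h : ∀ t : ℝ, HasDerivAt (fun y : ℝ => x*(1-x)/4 * y^4 - x/5 * y^5)
      ((1-x-t) * x * t^3) t := by
    intro t
    have h4 := (hasDerivAt_pow 4 t).const_mul (x*(1-x)/4)
    have h5 := (hasDerivAt_pow 5 t).const_mul (x/5)
    refine (h4.sub h5).congr_deriv ?_
    push_cast; ring
  rw [intervalIntegral.integral_eq_sub_of_hasDerivAt (fun t _ => h t)
    (by apply Continuous.intervalIntegrable; fun_prop)]
  ring

lemma inner221 : ∫ t in (0:ℝ)..(1-x), (1-x-t)^2 * x^2 * t = x^2*(1-x)^4/12 := by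
  have h : ∀ t : ℝ, HasDerivAt (fun y : ℝ =>
      x^2*(1-x)^2/2 * y^2 - 2*x^2*(1-x)/3 * y^3 + x^2/4 * y^4)
      ((1-x-t)^2 * x^2 * t) t := by
    intro t
    have h2 := (hasDerivAt_pow 2 t).const_mul (x^2*(1-x)^2/2)
    have h3 := (hasDerivAt_pow 3 t).const_mul (2*x^2*(1-x)/3)
    have h4 := (hasDerivAt_pow 4 t).const_mul (x^2/4)
    refine ((h2.sub h3).add h4).congr_deriv ?_
    push_cast; ring
  rw [intervalIntegral.integral_eq_sub_of_hasDerivAt (fun t _ => h t)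
    (by apply Continuous.intervalIntegrable; fun_prop)]
  ring

lemma inner212 : ∫ t in (0:ℝ)..(1-x), (1-x-t)^2 * x * t^2 = x*(1-x)^5/30 := by
  have h : ∀ t : ℝ, HasDerivAt (fun y : ℝ =>
      x*(1-x)^2/3 * y^3 - x*(1-x)/2 * y^4 + x/5 * y^5)
      ((1-x-t)^2 * x * t^2) t := by
    intro t
    have h3 := (hasDerivAt_pow 3 t).const_mul (x*(1-x)^2/3)
    have h4 := (hasDerivAt_pow 4 t).const_mul (x*(1-x)/2)
    have h5 := (hasDerivAt_pow 5 t).const_mul (x/5)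
    refine ((h3.sub h4).add h5).congr_deriv ?_
    push_cast; ring
  rw [intervalIntegral.integral_eq_sub_of_hasDerivAt (fun t _ => h t)
    (by apply Continuous.intervalIntegrable; fun_prop)]
  ring

lemma inner122 : ∫ t in (0:ℝ)..(1-x), (1-x-t) * x^2 * t^2 = x^2*(1-x)^4/12 := by
  have h : ∀ t : ℝ, HasDerivAt (fun y : ℝ => x^2*(1-x)/3 * y^3 - x^2/4 * y^4)
      ((1-x-t) * x^2 * t^2) t := by
    intro t
    have h3 := (hasDerivAt_pow 3 t).const_mul (x^2*(1-x)/3)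
    have h4 := (hasDerivAt_pow 4 t).const_mul (x^2/4)
    refine (h3.sub h4).congr_deriv ?_
    push_cast; ring
  rw [intervalIntegral.integral_eq_sub_of_hasDerivAt (fun t _ => h t)
    (by apply Continuous.intervalIntegrable; fun_prop)]
  ring

end inners

lemma outer33 : ∫ x in (0:ℝ)..1, x^3*(1-x)^3/6 = 1/840 := by
  have h : ∀ x : ℝ, HasDerivAt (fun y : ℝ =>
      1/24 * y^4 - 1/10 * y^5 + 1/12 * y^6 - 1/42 * y^7)
      (x^3*(1-x)^3/6) x := by
    intro x
    have h4 := (hasDerivAt_pow 4 x).const_mul (1/24 : ℝ)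
    have h5 := (hasDerivAt_pow 5 x).const_mul (1/10 : ℝ)
    have h6 := (hasDerivAt_pow 6 x).const_mul (1/12 : ℝ)
    have h7 := (hasDerivAt_pow 7 x).const_mul (1/42 : ℝ)
    refine (((h4.sub h5).add h6).sub h7).congr_deriv ?_
    push_cast; ring
  rw [intervalIntegral.integral_eq_sub_of_hasDerivAt (fun x _ => h x)
    (by apply Continuous.intervalIntegrable; fun_prop)]
  norm_num

lemma outer24 : ∫ x in (0:ℝ)..1, x^2*(1-x)^4/12 = 1/1260 := by
  have h : ∀ x : ℝ, HasDerivAt (fun y : ℝ =>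
      1/36 * y^3 - 1/12 * y^4 + 1/10 * y^5 - 1/18 * y^6 + 1/84 * y^7)
      (x^2*(1-x)^4/12) x := by
    intro x
    have h3 := (hasDerivAt_pow 3 x).const_mul (1/36 : ℝ)
    have h4 := (hasDerivAt_pow 4 x).const_mul (1/12 : ℝ)
    have h5 := (hasDerivAt_pow 5 x).const_mul (1/10 : ℝ)
    have h6 := (hasDerivAt_pow 6 x).const_mul (1/18 : ℝ)
    have h7 := (hasDerivAt_pow 7 x).const_mul (1/84 : ℝ)
    refine ((((h3.sub h4).add h5).sub h6).add h7).congr_deriv ?_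
    push_cast; ring
  rw [intervalIntegral.integral_eq_sub_of_hasDerivAt (fun x _ => h x)
    (by apply Continuous.intervalIntegrable; fun_prop)]
  norm_num

lemma outer05 : ∫ x in (0:ℝ)..1, x*(1-x)^5/30 = 1/1260 := by
  have h : ∀ x : ℝ, HasDerivAt (fun y : ℝ =>
      1/60 * y^2 - 1/18 * y^3 + 1/12 * y^4 - 1/15 * y^5 + 1/36 * y^6 - 1/210 * y^7)
      (x*(1-x)^5/30) x := by
    intro x
    have h2 := (hasDerivAt_pow 2 x).const_mul (1/60 : ℝ)
    have h3 := (hasDerivAt_pow 3 x).const_mul (1/18 : ℝ)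
    have h4 := (hasDerivAt_pow 4 x).const_mul (1/12 : ℝ)
    have h5 := (hasDerivAt_pow 5 x).const_mul (1/15 : ℝ)
    have h6 := (hasDerivAt_pow 6 x).const_mul (1/36 : ℝ)
    have h7 := (hasDerivAt_pow 7 x).const_mul (1/210 : ℝ)
    refine (((((h2.sub h3).add h4).sub h5).add h6).sub h7).congr_deriv ?_
    push_cast; ring
  rw [intervalIntegral.integral_eq_sub_of_hasDerivAt (fun x _ => h x)
    (by apply Continuous.intervalIntegrable; fun_prop)]
  norm_num

lemma outer01 : ∫ x in (0:ℝ)..1, (1-x) = 1/2 := by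
  have h : ∀ x : ℝ, HasDerivAt (fun y : ℝ => y - 1/2 * y^2) (1-x) x := by
    intro x
    have h1 := hasDerivAt_id x
    have h2 := (hasDerivAt_pow 2 x).const_mul (1/2 : ℝ)
    refine (h1.sub h2).congr_deriv ?_
    push_cast; ring
  rw [intervalIntegral.integral_eq_sub_of_hasDerivAt (fun x _ => h x)
    (by apply Continuous.intervalIntegrable; fun_prop)]
  norm_num

section Js

theorem J131 : ∫ p in S2', (1-p.1-p.2) * p.1^3 * p.2 = 1/840 := by
  rw [simplex_fubini (fun s t => (1-s-t) * s^3 * t) (by fun_prop)]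
  have hcg : Set.EqOn (fun x : ℝ => ∫ t in Set.Icc 0 (1-x), (1-x-t) * x^3 * t)
      (fun x : ℝ => x^3*(1-x)^3/6) (Set.Icc 0 1) := by
    intro x hx
    have hx1 : (0:ℝ) ≤ 1 - x := by have := hx.2; linarith
    show (∫ t in Set.Icc 0 (1-x), (1-x-t) * x^3 * t) = x^3*(1-x)^3/6
    rw [integral_Icc_eq_integral_Ioc, ← intervalIntegral.integral_of_le hx1, inner131]
  rw [setIntegral_congr_fun measurableSet_Icc hcg, integral_Icc_eq_integral_Ioc,
    ← intervalIntegral.integral_of_le (zero_le_one), outer33]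

theorem J113 : ∫ p in S2', (1-p.1-p.2) * p.1 * p.2^3 = 1/840 := by
  rw [simplex_fubini (fun s t => (1-s-t) * s * t^3) (by fun_prop)]
  have hcg : Set.EqOn (fun x : ℝ => ∫ t in Set.Icc 0 (1-x), (1-x-t) * x * t^3)
      (fun x : ℝ => x*(1-x)^5/20) (Set.Icc 0 1) := by
    intro x hx
    have hx1 : (0:ℝ) ≤ 1 - x := by have := hx.2; linarith
    show (∫ t in Set.Icc 0 (1-x), (1-x-t) * x * t^3) = x*(1-x)^5/20
    rw [integral_Icc_eq_integral_Ioc, ← intervalIntegral.integral_of_le hx1, inner113]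
  rw [setIntegral_congr_fun measurableSet_Icc hcg, integral_Icc_eq_integral_Ioc,
    ← intervalIntegral.integral_of_le (zero_le_one), outer15]

theorem J221 : ∫ p in S2', (1-p.1-p.2)^2 * p.1^2 * p.2 = 1/1260 := by
  rw [simplex_fubini (fun s t => (1-s-t)^2 * s^2 * t) (by fun_prop)]
  have hcg : Set.EqOn (fun x : ℝ => ∫ t in Set.Icc 0 (1-x), (1-x-t)^2 * x^2 * t)
      (fun x : ℝ => x^2*(1-x)^4/12) (Set.Icc 0 1) := by
    intro x hx
    have hx1 : (0:ℝ) ≤ 1 - x := by have := hx.2; linarith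
    show (∫ t in Set.Icc 0 (1-x), (1-x-t)^2 * x^2 * t) = x^2*(1-x)^4/12
    rw [integral_Icc_eq_integral_Ioc, ← intervalIntegral.integral_of_le hx1, inner221]
  rw [setIntegral_congr_fun measurableSet_Icc hcg, integral_Icc_eq_integral_Ioc,
    ← intervalIntegral.integral_of_le (zero_le_one), outer24]

theorem J212 : ∫ p in S2', (1-p.1-p.2)^2 * p.1 * p.2^2 = 1/1260 := by
  rw [simplex_fubini (fun s t => (1-s-t)^2 * s * t^2) (by fun_prop)]
  have hcg : Set.EqOn (fun x : ℝ => ∫ t in Set.Icc 0 (1-x), (1-x-t)^2 * x * t^2)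
      (fun x : ℝ => x*(1-x)^5/30) (Set.Icc 0 1) := by
    intro x hx
    have hx1 : (0:ℝ) ≤ 1 - x := by have := hx.2; linarith
    show (∫ t in Set.Icc 0 (1-x), (1-x-t)^2 * x * t^2) = x*(1-x)^5/30
    rw [integral_Icc_eq_integral_Ioc, ← intervalIntegral.integral_of_le hx1, inner212]
  rw [setIntegral_congr_fun measurableSet_Icc hcg, integral_Icc_eq_integral_Ioc,
    ← intervalIntegral.integral_of_le (zero_le_one), outer05]

theorem J122 : ∫ p in S2', (1-p.1-p.2) * p.1^2 * p.2^2 = 1/1260 := by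
  rw [simplex_fubini (fun s t => (1-s-t) * s^2 * t^2) (by fun_prop)]
  have hcg : Set.EqOn (fun x : ℝ => ∫ t in Set.Icc 0 (1-x), (1-x-t) * x^2 * t^2)
      (fun x : ℝ => x^2*(1-x)^4/12) (Set.Icc 0 1) := by
    intro x hx
    have hx1 : (0:ℝ) ≤ 1 - x := by have := hx.2; linarith
    show (∫ t in Set.Icc 0 (1-x), (1-x-t) * x^2 * t^2) = x^2*(1-x)^4/12
    rw [integral_Icc_eq_integral_Ioc, ← intervalIntegral.integral_of_le hx1, inner122]
  rw [setIntegral_congr_fun measurableSet_Icc hcg, integral_Icc_eq_integral_Ioc,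
    ← intervalIntegral.integral_of_le (zero_le_one), outer24]

theorem J000 : ∫ _p in S2', (1:ℝ) = 1/2 := by
  rw [simplex_fubini (fun _ _ => (1:ℝ)) (by fun_prop)]
  have hcg : Set.EqOn (fun x : ℝ => ∫ _t in Set.Icc (0:ℝ) (1-x), (1:ℝ))
      (fun x : ℝ => 1-x) (Set.Icc 0 1) := by
    intro x hx
    have hx1 : (0:ℝ) ≤ 1 - x := by have := hx.2; linarith
    show (∫ _t in Set.Icc (0:ℝ) (1-x), (1:ℝ)) = 1-x
    rw [setIntegral_const, Real.volume_real_Icc_of_le hx1, smul_eq_mul, mul_one, sub_zero]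
  rw [setIntegral_congr_fun measurableSet_Icc hcg, integral_Icc_eq_integral_Ioc,
    ← intervalIntegral.integral_of_le (zero_le_one), outer01]


def S2 : Set Pt := {y | 0 ≤ y 0 ∧ 0 ≤ y 1 ∧ y 0 + y 1 ≤ 1}

lemma euc_transfer (F : ℝ → ℝ → ℝ) :
    ∫ y in S2, F (y 0) (y 1) = ∫ p in S2', F p.1 p.2 := by
  have he : MeasurePreserving
      (((MeasurableEquiv.toLp 2 (Fin 2 → ℝ)).symm).trans (MeasurableEquiv.finTwoArrow))
      volume volume :=
    (volume_preserving_finTwoArrow ℝ).comp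
      (EuclideanSpace.volume_preserving_symm_measurableEquiv_toLp (Fin 2))
  have hS2 : S2 = (((MeasurableEquiv.toLp 2 (Fin 2 → ℝ)).symm).trans
      (MeasurableEquiv.finTwoArrow)) ⁻¹' S2' := rfl
  rw [hS2]
  exact he.setIntegral_preimage_emb
    (((MeasurableEquiv.toLp 2 (Fin 2 → ℝ)).symm).trans (MeasurableEquiv.finTwoArrow)).measurableEmbedding
    (fun p => F p.1 p.2) S2'

lemma hc0 : Continuous fun y : Pt => y 0 := (EuclideanSpace.proj (0 : Fin 2)).continuous
lemma hc1 : Continuous fun y : Pt => y 1 := (EuclideanSpace.proj (1 : Fin 2)).continuous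

lemma S2_meas : MeasurableSet S2 := by
  have : S2 = {y : Pt | 0 ≤ y 0} ∩ ({y : Pt | 0 ≤ y 1} ∩ {y : Pt | y 0 + y 1 ≤ 1}) := rfl
  rw [this]
  exact ((isClosed_le continuous_const hc0).inter
    ((isClosed_le continuous_const hc1).inter
      (isClosed_le (hc0.add hc1) continuous_const))).measurableSet

lemma S2_convexHull :
    S2 = convexHull ℝ {(0:Pt), EuclideanSpace.single 0 1, EuclideanSpace.single 1 1} := by
  apply Set.Subset.antisymm
  · intro y hy
    obtain ⟨h0, h1, h2⟩ := hy
    have hmem : ∀ z ∈ ({(0:Pt), EuclideanSpace.single 0 1, EuclideanSpace.single 1 1} : Set Pt),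
        z ∈ convexHull ℝ ({(0:Pt), EuclideanSpace.single 0 1, EuclideanSpace.single 1 1} : Set Pt) :=
      fun z hz => subset_convexHull ℝ _ hz
    have key := (convex_convexHull ℝ
        ({(0:Pt), EuclideanSpace.single 0 1, EuclideanSpace.single 1 1} : Set Pt)).sum_mem
      (t := Finset.univ) (w := ![1 - y 0 - y 1, y 0, y 1])
      (z := ![0, EuclideanSpace.single 0 1, EuclideanSpace.single 1 1])
      (by intro i _; fin_cases i <;> simp <;> linarith)
      (by simp [Fin.sum_univ_three]; ring)
      (by intro i _; fin_cases i <;>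
            [exact hmem _ (by simp); exact hmem _ (by simp); exact hmem _ (by simp)])
    have hy_eq : y = ∑ i : Fin 3, (![1 - y 0 - y 1, y 0, y 1] i) •
        (![0, EuclideanSpace.single 0 1, EuclideanSpace.single 1 1] i : Pt) := by
      ext j
      rw [Fin.sum_univ_three]
      fin_cases j <;>
        simp [EuclideanSpace.single_apply, PiLp.add_apply, PiLp.smul_apply, smul_eq_mul]
    rw [hy_eq]
    exact key
  · apply convexHull_min
    · rintro z (rfl | rfl | rfl)
      · exact ⟨le_refl 0, le_refl 0, by norm_num⟩
      · refine ⟨?_, ?_, ?_⟩ <;> simp [EuclideanSpace.single_apply]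
      · refine ⟨?_, ?_, ?_⟩ <;> simp [EuclideanSpace.single_apply]
    · intro x hx y hy α β hα hβ hαβ
      obtain ⟨hx0, hx1, hx2⟩ := hx
      obtain ⟨hy0, hy1, hy2⟩ := hy
      refine ⟨?_, ?_, ?_⟩ <;>
        simp only [PiLp.add_apply, PiLp.smul_apply, smul_eq_mul]
      · exact add_nonneg (mul_nonneg hα hx0) (mul_nonneg hβ hy0)
      · exact add_nonneg (mul_nonneg hα hx1) (mul_nonneg hβ hy1)
      · nlinarith


lemma tri_moments (a : Fin 3 → Pt) (ha : AffineIndependent ℝ a)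
    (g : Fin 3 → Pt) (c : Fin 3 → ℝ) (lam : Fin 3 → Pt → ℝ)
    (hlam : ∀ i x, lam i x = ⟪g i, x⟫ + c i)
    (hdual : ∀ i j, lam i (a j) = if i = j then 1 else 0) (i k : Fin 3) :
    triAvg a (fun x => lam k x * psiQ lam i x) = if k = i then 1/420 else 1/630 := by
  classical
  set v1 : Pt := a 1 - a 0 with hv1
  set v2 : Pt := a 2 - a 0 with hv2
  set B : Pt →L[ℝ] Pt :=
    (EuclideanSpace.proj (0 : Fin 2)).smulRight v1 +
      (EuclideanSpace.proj (1 : Fin 2)).smulRight v2 with hB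
  set φ : Pt → Pt := fun y => a 0 + B y with hφ
  have hBapp : ∀ y : Pt, B y = y 0 • v1 + y 1 • v2 := fun y => rfl
  -- linear independence of v1 v2
  have hlin : ∀ r s : ℝ, r • v1 + s • v2 = 0 → r = 0 ∧ s = 0 := by
    intro r s hrs
    have hw : ∑ e ∈ Finset.univ, (![-(r+s), r, s]) e = 0 := by
      rw [Fin.sum_univ_three]
      simp only [Matrix.cons_val_zero, Matrix.cons_val_one, Matrix.head_cons,
        Matrix.cons_val_two, Matrix.tail_cons]
      ring
    have hv : ∑ e ∈ Finset.univ, (![-(r+s), r, s]) e • a e = 0 := by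
      rw [Fin.sum_univ_three]
      simp only [Matrix.cons_val_zero, Matrix.cons_val_one, Matrix.head_cons,
        Matrix.cons_val_two, Matrix.tail_cons]
      rw [hv1, hv2] at hrs
      have : r • (a 1 - a 0) + s • (a 2 - a 0)
          = (-(r+s)) • a 0 + r • a 1 + s • a 2 := by module
      rw [← this, hrs]
    have h1 := affineIndependent_iff.mp ha Finset.univ _ hw hv 1 (Finset.mem_univ 1)
    have h2 := affineIndependent_iff.mp ha Finset.univ _ hw hv 2 (Finset.mem_univ 2)
    simp only [Matrix.cons_val_one, Matrix.head_cons, Matrix.cons_val_two,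
      Matrix.tail_cons] at h1 h2
    exact ⟨h1, h2⟩
  have hBinj : Function.Injective B := by
    intro y z hyz
    have h0 : B (y - z) = 0 := by rw [map_sub, hyz, sub_self]
    rw [hBapp] at h0
    have hc : (y - z) 0 = y 0 - z 0 ∧ (y - z) 1 = y 1 - z 1 := ⟨rfl, rfl⟩
    rw [hc.1, hc.2] at h0
    obtain ⟨e1, e2⟩ := hlin _ _ h0
    ext j
    fin_cases j
    · exact sub_eq_zero.mp e1
    · exact sub_eq_zero.mp e2
  have hdet : (B : Pt →L[ℝ] Pt).det ≠ 0 := by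
    intro h
    have hker := LinearMap.bot_lt_ker_of_det_eq_zero h
    rw [LinearMap.ker_eq_bot.mpr hBinj] at hker
    exact lt_irrefl _ hker
  have hφder : ∀ y ∈ S2, HasFDerivWithinAt φ B S2 y := fun y _ =>
    ((B.hasFDerivAt (x := y)).const_add (a 0)).hasFDerivWithinAt
  have hφinj : Set.InjOn φ S2 := fun y _ z _ h => hBinj (add_left_cancel h)
  -- the image of the standard simplex is the triangle
  have hφ0 : φ 0 = a 0 := by simp [hφ]
  have hφu0 : φ (EuclideanSpace.single 0 1) = a 1 := by
    show a 0 + B (EuclideanSpace.single 0 1) = a 1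
    rw [hBapp]
    simp only [EuclideanSpace.single_apply]
    norm_num
    rw [hv1]
    abel
  have hφu1 : φ (EuclideanSpace.single 1 1) = a 2 := by
    show a 0 + B (EuclideanSpace.single 1 1) = a 2
    rw [hBapp]
    simp only [EuclideanSpace.single_apply]
    norm_num
    rw [hv2]
    abel
  have hrange : Set.range a = {a 0, a 1, a 2} := by
    ext x
    constructor
    · rintro ⟨j, rfl⟩
      fin_cases j
      · exact Or.inl rfl
      · exact Or.inr (Or.inl rfl)
      · exact Or.inr (Or.inr rfl)
    · rintro (rfl | rfl | rfl) <;> exact ⟨_, rfl⟩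
  set φA : Pt →ᵃ[ℝ] Pt := AffineMap.const ℝ Pt (a 0) + (B : Pt →ₗ[ℝ] Pt).toAffineMap with hφA
  have hφAeq : (φA : Pt → Pt) = φ := rfl
  have himg : φ '' S2 = convexHull ℝ (Set.range a) := by
    rw [S2_convexHull, ← hφAeq, AffineMap.image_convexHull, hφAeq, hrange]
    congr 1
    rw [Set.image_insert_eq, Set.image_insert_eq, Set.image_singleton, hφ0, hφu0, hφu1]
  have hkey : ∀ f : Pt → ℝ, ∫ x in convexHull ℝ (Set.range a), f x
      = |(B : Pt →L[ℝ] Pt).det| * ∫ y in S2, f (φ y) := by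
    intro f
    rw [← himg, integral_image_eq_integral_abs_det_fderiv_smul volume S2_meas hφder hφinj f]
    simp only [smul_eq_mul]
    rw [integral_const_mul]
  have h2 : ∫ _y in S2, (1:ℝ) = 1/2 := (euc_transfer fun _ _ => (1:ℝ)).trans J000
  have htot : (volume (convexHull ℝ (Set.range a))).toReal = |(B : Pt →L[ℝ] Pt).det| * (1/2) := by
    have h1 := hkey fun _ => (1:ℝ)
    rw [setIntegral_const, smul_eq_mul, mul_one, h2] at h1
    exact h1
  have hφyval : ∀ y : Pt, φ y = a 0 + (y 0 • v1 + y 1 • v2) := fun y => by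
    show a 0 + B y = _
    rw [hBapp]
  have hj : ∀ (j : Fin 3) (x : Pt), ⟪g j, x⟫ = lam j x - c j := fun j x => by
    rw [hlam]; ring
  have hcomp : ∀ (j : Fin 3) (y : Pt), lam j (φ y)
      = lam j (a 0) + y 0 * (lam j (a 1) - lam j (a 0)) + y 1 * (lam j (a 2) - lam j (a 0)) := by
    intro j y
    rw [hlam, hφyval y, hv1, hv2, inner_add_right, inner_add_right, real_inner_smul_right,
      real_inner_smul_right, inner_sub_right, inner_sub_right]
    simp only [hj]
    ring
  have hval0 : ∀ y : Pt, lam 0 (φ y) = 1 - y 0 - y 1 := by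
    intro y
    rw [hcomp, hdual, hdual, hdual, if_pos rfl, if_neg (by decide), if_neg (by decide)]
    ring
  have hval1 : ∀ y : Pt, lam 1 (φ y) = y 0 := by
    intro y
    rw [hcomp, hdual, hdual, hdual, if_neg (by decide), if_pos rfl, if_neg (by decide)]
    ring
  have hval2 : ∀ y : Pt, lam 2 (φ y) = y 1 := by
    intro y
    rw [hcomp, hdual, hdual, hdual, if_neg (by decide), if_neg (by decide), if_pos rfl]
    ring
  have hATavg : triAvg a (fun x => lam k x * psiQ lam i x)
      = (|(B : Pt →L[ℝ] Pt).det| * (1/2))⁻¹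
        * (|(B : Pt →L[ℝ] Pt).det| * ∫ y in S2, lam k (φ y) * psiQ lam i (φ y)) := by
    rw [triAvg, setAverage_eq, smul_eq_mul, measureReal_def, htot, hkey (fun x => lam k x * psiQ lam i x)]
  have harith : ∀ V : ℝ, (|(B : Pt →L[ℝ] Pt).det| * (1/2))⁻¹
      * (|(B : Pt →L[ℝ] Pt).det| * V) = 2 * V := by
    intro V
    have hd : |(B : Pt →L[ℝ] Pt).det| ≠ 0 := abs_ne_zero.2 hdet
    field_simp
  have hI : ∀ m : Fin 3, m = 0 ∨ m = 1 ∨ m = 2 := by decide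
  rcases hI i with rfl | rfl | rfl <;> rcases hI k with rfl | rfl | rfl
  · -- i = 0, k = 0 : J311
    rw [if_pos rfl, hATavg]
    have hpt : ∀ y : Pt, lam 0 (φ y) * psiQ lam 0 (φ y)
        = (1 - y 0 - y 1)^3 * (y 0) * (y 1) := by
      intro y; simp only [psiQ]; rw [hval0, hval1, hval2]; ring
    rw [(setIntegral_congr_fun S2_meas (fun y _ => hpt y)).trans
      ((euc_transfer (fun s t => (1-s-t)^3 * s * t)).trans J311), harith]
    norm_num
  · -- i = 0, k = 1 : J221
    rw [if_neg (by decide), hATavg]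
    have hpt : ∀ y : Pt, lam 1 (φ y) * psiQ lam 0 (φ y)
        = (1 - y 0 - y 1)^2 * (y 0)^2 * (y 1) := by
      intro y; simp only [psiQ]; rw [hval0, hval1, hval2]; ring
    rw [(setIntegral_congr_fun S2_meas (fun y _ => hpt y)).trans
      ((euc_transfer (fun s t => (1-s-t)^2 * s^2 * t)).trans J221), harith]
    norm_num
  · -- i = 0, k = 2 : J212
    rw [if_neg (by decide), hATavg]
    have hpt : ∀ y : Pt, lam 2 (φ y) * psiQ lam 0 (φ y)
        = (1 - y 0 - y 1)^2 * (y 0) * (y 1)^2 := by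
      intro y; simp only [psiQ]; rw [hval0, hval1, hval2]; ring
    rw [(setIntegral_congr_fun S2_meas (fun y _ => hpt y)).trans
      ((euc_transfer (fun s t => (1-s-t)^2 * s * t^2)).trans J212), harith]
    norm_num
  · -- i = 1, k = 0 : J221
    rw [if_neg (by decide), hATavg]
    have hpt : ∀ y : Pt, lam 0 (φ y) * psiQ lam 1 (φ y)
        = (1 - y 0 - y 1)^2 * (y 0)^2 * (y 1) := by
      intro y; simp only [psiQ]; rw [hval0, hval1, hval2]; ring
    rw [(setIntegral_congr_fun S2_meas (fun y _ => hpt y)).trans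
      ((euc_transfer (fun s t => (1-s-t)^2 * s^2 * t)).trans J221), harith]
    norm_num
  · -- i = 1, k = 1 : J131
    rw [if_pos rfl, hATavg]
    have hpt : ∀ y : Pt, lam 1 (φ y) * psiQ lam 1 (φ y)
        = (1 - y 0 - y 1) * (y 0)^3 * (y 1) := by
      intro y; simp only [psiQ]; rw [hval0, hval1, hval2]; ring
    rw [(setIntegral_congr_fun S2_meas (fun y _ => hpt y)).trans
      ((euc_transfer (fun s t => (1-s-t) * s^3 * t)).trans J131), harith]
    norm_num
  · -- i = 1, k = 2 : J122
    rw [if_neg (by decide), hATavg]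
    have hpt : ∀ y : Pt, lam 2 (φ y) * psiQ lam 1 (φ y)
        = (1 - y 0 - y 1) * (y 0)^2 * (y 1)^2 := by
      intro y; simp only [psiQ]; rw [hval0, hval1, hval2]; ring
    rw [(setIntegral_congr_fun S2_meas (fun y _ => hpt y)).trans
      ((euc_transfer (fun s t => (1-s-t) * s^2 * t^2)).trans J122), harith]
    norm_num
  · -- i = 2, k = 0 : J212
    rw [if_neg (by decide), hATavg]
    have hpt : ∀ y : Pt, lam 0 (φ y) * psiQ lam 2 (φ y)
        = (1 - y 0 - y 1)^2 * (y 0) * (y 1)^2 := by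
      intro y; simp only [psiQ]; rw [hval0, hval1, hval2]; ring
    rw [(setIntegral_congr_fun S2_meas (fun y _ => hpt y)).trans
      ((euc_transfer (fun s t => (1-s-t)^2 * s * t^2)).trans J212), harith]
    norm_num
  · -- i = 2, k = 1 : J122
    rw [if_neg (by decide), hATavg]
    have hpt : ∀ y : Pt, lam 1 (φ y) * psiQ lam 2 (φ y)
        = (1 - y 0 - y 1) * (y 0)^2 * (y 1)^2 := by
      intro y; simp only [psiQ]; rw [hval0, hval1, hval2]; ring
    rw [(setIntegral_congr_fun S2_meas (fun y _ => hpt y)).trans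
      ((euc_transfer (fun s t => (1-s-t) * s^2 * t^2)).trans J122), harith]
    norm_num
  · -- i = 2, k = 2 : J113
    rw [if_pos rfl, hATavg]
    have hpt : ∀ y : Pt, lam 2 (φ y) * psiQ lam 2 (φ y)
        = (1 - y 0 - y 1) * (y 0) * (y 1)^3 := by
      intro y; simp only [psiQ]; rw [hval0, hval1, hval2]; ring
    rw [(setIntegral_congr_fun S2_meas (fun y _ => hpt y)).trans
      ((euc_transfer (fun s t => (1-s-t) * s * t^3)).trans J113), harith]
    norm_num


/-- Edge and cell moments of the quartic bubbles `ψ_i = λ_i Λ`. -/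
theorem psiQ_moments
    (a : Fin 3 → Pt) (ha : AffineIndependent ℝ a)
    (g : Fin 3 → Pt) (c : Fin 3 → ℝ) (lam : Fin 3 → Pt → ℝ)
    (hlam : ∀ i x, lam i x = ⟪g i, x⟫ + c i)
    (hdual : ∀ i j, lam i (a j) = if i = j then 1 else 0) :
    ∀ i k : Fin 3,
      (k = i → edgeAvg a k (nderiv g k (psiQ lam i)) = 0) ∧
      (k ≠ i → edgeAvg a k (nderiv g k (psiQ lam i)) = -(1/12) * ‖g k‖) ∧
      (k = i → triAvg a (fun x => lam k x * psiQ lam i x) = 1/420) ∧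
      (k ≠ i → triAvg a (fun x => lam k x * psiQ lam i x) = 1/630) := by
  intro i k
  refine ⟨fun hk => ?_, fun hk => ?_, fun hk => ?_, fun hk => ?_⟩
  · rw [edge_moments a ha g c lam hlam hdual i k, if_pos hk]
  · rw [edge_moments a ha g c lam hlam hdual i k, if_neg hk]
  · rw [tri_moments a ha g c lam hlam hdual i k, if_pos hk]
  · rw [tri_moments a ha g c lam hlam hdual i k, if_neg hk]
end Js
end
end

section
/- Averaged normal-derivative moments used for FE_ec: define f_k(v) = ⨍_{e_k} ∂_n v for k = 1,2,3. Then for all i, k ∈ {1,2,3}: f_k(λ_i²λ_{i+1} − λ_iλ_{i+1}²) = (1/3)‖∇λ_k‖ if k ≡ i (mod 3), = −(1/3)‖∇λ_k‖ if k ≡ i+1 (mod 3), and = 0 if k ≡ i+2 (mod 3); and f_k(λ_i Λ) = 0 if k ≡ i (mod 3) and = −(1/12)‖∇λ_k‖ if k ≢ i (mod 3). -/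
open MeasureTheory
open scoped RealInnerProductSpace

noncomputable section

/- ### Auxiliary lemmas -/

lemma FEaux_segment_average (p q : Pt) (hpq : p ≠ q) (f : Pt → ℝ) (hf : Continuous f) :
    ⨍ x in segment ℝ p q, f x ∂(μH[1] : Measure Pt) =
      ∫ t in (0:ℝ)..1, f (AffineMap.lineMap p q t) := by
  have hφc : Continuous (AffineMap.lineMap p q : ℝ →ᵃ[ℝ] Pt) := AffineMap.lineMap_continuous
  have hmap : (μH[1] : Measure Pt).restrict (segment ℝ p q)
      = (nndist p q) • Measure.map (AffineMap.lineMap p q : ℝ →ᵃ[ℝ] Pt)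
          (volume.restrict (Set.Icc 0 1)) := by
    ext A hA
    rw [Measure.restrict_apply hA, Measure.smul_apply,
      Measure.map_apply hφc.measurable hA,
      Measure.restrict_apply (hφc.measurable hA),
      segment_eq_image_lineMap ℝ p q, ← Set.image_preimage_inter,
      MeasureTheory.hausdorffMeasure_lineMap_image, MeasureTheory.hausdorffMeasure_real]
  have hd0 : dist p q ≠ 0 := dist_ne_zero.2 hpq
  rw [setAverage_eq, hmap, integral_smul_nnreal_measure,
    integral_map hφc.measurable.aemeasurable hf.aestronglyMeasurable,
    measureReal_def, MeasureTheory.hausdorffMeasure_segment, edist_dist, ENNReal.toReal_ofReal dist_nonneg,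
    MeasureTheory.integral_Icc_eq_integral_Ioc,
    ← intervalIntegral.integral_of_le (zero_le_one), NNReal.smul_def, coe_nndist,
    smul_smul, inv_mul_cancel₀ hd0, one_smul]

lemma FEaux_inner_gradient {v : Pt → ℝ} {x : Pt} {L : Pt →L[ℝ] ℝ}
    (h : HasFDerivAt v L x) (w : Pt) : ⟪gradient v x, w⟫ = L w := by
  unfold gradient
  rw [h.fderiv]
  exact InnerProductSpace.toDual_symm_apply

lemma FEaux_hasFDerivAt_lam {g : Fin 3 → Pt} {c : Fin 3 → ℝ} {lam : Fin 3 → Pt → ℝ}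
    (hlam : ∀ i x, lam i x = ⟪g i, x⟫ + c i) (i : Fin 3) (x : Pt) :
    HasFDerivAt (fun y => lam i y) (innerSL ℝ (g i)) x := by
  have h : (fun y => lam i y) = fun y => (innerSL ℝ (g i)) y + c i := by
    funext y; rw [hlam i y, innerSL_apply_apply]
  rw [h]
  exact (innerSL ℝ (g i)).hasFDerivAt.add_const (c i)

lemma FEaux_cont_lam {g : Fin 3 → Pt} {c : Fin 3 → ℝ} {lam : Fin 3 → Pt → ℝ}
    (hlam : ∀ i x, lam i x = ⟪g i, x⟫ + c i) (i : Fin 3) :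
    Continuous (fun y => lam i y) := by
  have h : (fun y => lam i y) = fun y => (innerSL ℝ (g i)) y + c i := by
    funext y; rw [hlam i y, innerSL_apply_apply]
  rw [h]
  exact (innerSL ℝ (g i)).continuous.add continuous_const

lemma FEaux_nderiv_v1 {g : Fin 3 → Pt} {c : Fin 3 → ℝ} {lam : Fin 3 → Pt → ℝ}
    (hlam : ∀ i x, lam i x = ⟪g i, x⟫ + c i) (i j k : Fin 3) (x : Pt) :
    nderiv g k (fun x => lam i x ^ 2 * lam j x - lam i x * lam j x ^ 2) x =
      -(‖g k‖⁻¹ * ((2 * lam i x * lam j x - lam j x ^ 2) * ⟪g i, g k⟫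
        + (lam i x ^ 2 - 2 * lam i x * lam j x) * ⟪g j, g k⟫)) := by
  have hi := FEaux_hasFDerivAt_lam hlam i x
  have hj := FEaux_hasFDerivAt_lam hlam j x
  have hp2 : HasFDerivAt (fun y => lam i y ^ 2)
      (lam i x • innerSL ℝ (g i) + lam i x • innerSL ℝ (g i)) x := by
    have hm : HasFDerivAt (fun y => lam i y * lam i y) _ x := hi.mul hi
    simpa only [← pow_two] using hm
  have hq2 : HasFDerivAt (fun y => lam j y ^ 2)
      (lam j x • innerSL ℝ (g j) + lam j x • innerSL ℝ (g j)) x := by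
    have hm : HasFDerivAt (fun y => lam j y * lam j y) _ x := hj.mul hj
    simpa only [← pow_two] using hm
  have hv : HasFDerivAt (fun x => lam i x ^ 2 * lam j x - lam i x * lam j x ^ 2) _ x :=
    (hp2.mul hj).sub (hi.mul hq2)
  unfold nderiv
  rw [FEaux_inner_gradient hv]
  simp only [ContinuousLinearMap.sub_apply, ContinuousLinearMap.add_apply,
    ContinuousLinearMap.smul_apply, innerSL_apply_apply, inner_neg_right, real_inner_smul_right,
    smul_eq_mul]
  ring

lemma FEaux_nderiv_v2 {g : Fin 3 → Pt} {c : Fin 3 → ℝ} {lam : Fin 3 → Pt → ℝ}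
    (hlam : ∀ i x, lam i x = ⟪g i, x⟫ + c i) (i j0 j1 j2 k : Fin 3) (x : Pt) :
    nderiv g k (fun x => lam i x * (lam j0 x * lam j1 x * lam j2 x)) x =
      -(‖g k‖⁻¹ * ((lam j0 x * lam j1 x * lam j2 x) * ⟪g i, g k⟫
        + lam i x * ((lam j1 x * lam j2 x) * ⟪g j0, g k⟫
          + (lam j0 x * lam j2 x) * ⟪g j1, g k⟫
          + (lam j0 x * lam j1 x) * ⟪g j2, g k⟫))) := by
  have hi := FEaux_hasFDerivAt_lam hlam i x
  have h0 := FEaux_hasFDerivAt_lam hlam j0 x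
  have h1 := FEaux_hasFDerivAt_lam hlam j1 x
  have h2 := FEaux_hasFDerivAt_lam hlam j2 x
  have hv : HasFDerivAt (fun x => lam i x * (lam j0 x * lam j1 x * lam j2 x)) _ x :=
    hi.mul ((h0.mul h1).mul h2)
  unfold nderiv
  rw [FEaux_inner_gradient hv]
  simp only [ContinuousLinearMap.sub_apply, ContinuousLinearMap.add_apply,
    ContinuousLinearMap.smul_apply, innerSL_apply_apply, inner_neg_right, real_inner_smul_right,
    smul_eq_mul, Pi.mul_apply]
  ring

lemma FEaux_int01 (f : ℝ → ℝ) (c0 c1 c2 c3 : ℝ)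
    (h : ∀ t : ℝ, f t = c0 * t ^ 0 + c1 * t ^ 1 + c2 * t ^ 2 + c3 * t ^ 3) :
    ∫ t in (0:ℝ)..1, f t = c0 + c1 / 2 + c2 / 3 + c3 / 4 := by
  have C : ∀ (c : ℝ) (n : ℕ), IntervalIntegrable (fun t : ℝ => c * t ^ n) volume 0 1 :=
    fun c n => (continuous_const.mul (continuous_pow n)).intervalIntegrable 0 1
  have hfg : (fun t : ℝ => f t)
      = fun t : ℝ => c0 * t ^ 0 + c1 * t ^ 1 + c2 * t ^ 2 + c3 * t ^ 3 := funext h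
  rw [hfg, intervalIntegral.integral_add (((C c0 0).add (C c1 1)).add (C c2 2)) (C c3 3),
    intervalIntegral.integral_add ((C c0 0).add (C c1 1)) (C c2 2),
    intervalIntegral.integral_add (C c0 0) (C c1 1),
    intervalIntegral.integral_const_mul, intervalIntegral.integral_const_mul,
    intervalIntegral.integral_const_mul, intervalIntegral.integral_const_mul,
    integral_pow, integral_pow, integral_pow, integral_pow]
  norm_num
  ring

lemma FEaux_lam_lineMap {g : Fin 3 → Pt} {c : Fin 3 → ℝ} {lam : Fin 3 → Pt → ℝ}
    (hlam : ∀ i x, lam i x = ⟪g i, x⟫ + c i) (j : Fin 3) (p q : Pt) (t : ℝ) :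
    lam j (AffineMap.lineMap p q t) = (1 - t) * lam j p + t * lam j q := by
  rw [AffineMap.lineMap_apply_module, hlam, hlam, hlam, inner_add_right,
    real_inner_smul_right, real_inner_smul_right]
  ring

lemma FEaux_prod_shift (lam : Fin 3 → Pt → ℝ) (k : Fin 3) (x : Pt) :
    lam 0 x * lam 1 x * lam 2 x = lam k x * lam (k+1) x * lam (k+2) x := by
  fin_cases k <;> simp <;> ring

lemma FEaux_cont_poly2 {g : Fin 3 → Pt} {c : Fin 3 → ℝ} {lam : Fin 3 → Pt → ℝ}
    (hlam : ∀ i x, lam i x = ⟪g i, x⟫ + c i) (i j k : Fin 3) :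
    Continuous (fun x => -(‖g k‖⁻¹ * ((2 * lam i x * lam j x - lam j x ^ 2) * ⟪g i, g k⟫
        + (lam i x ^ 2 - 2 * lam i x * lam j x) * ⟪g j, g k⟫))) := by
  have hci := FEaux_cont_lam hlam i
  have hcj := FEaux_cont_lam hlam j
  exact (continuous_const.mul ((((((continuous_const.mul hci).mul hcj).sub
    (hcj.pow 2)).mul continuous_const)).add
    (((hci.pow 2).sub ((continuous_const.mul hci).mul hcj)).mul continuous_const))).neg

lemma FEaux_cont_poly3 {g : Fin 3 → Pt} {c : Fin 3 → ℝ} {lam : Fin 3 → Pt → ℝ}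
    (hlam : ∀ i x, lam i x = ⟪g i, x⟫ + c i) (i j0 j1 j2 k : Fin 3) :
    Continuous (fun x => -(‖g k‖⁻¹ * ((lam j0 x * lam j1 x * lam j2 x) * ⟪g i, g k⟫
        + lam i x * ((lam j1 x * lam j2 x) * ⟪g j0, g k⟫
          + (lam j0 x * lam j2 x) * ⟪g j1, g k⟫
          + (lam j0 x * lam j1 x) * ⟪g j2, g k⟫)))) := by
  have hci := FEaux_cont_lam hlam i
  have h0 := FEaux_cont_lam hlam j0
  have h1 := FEaux_cont_lam hlam j1
  have h2 := FEaux_cont_lam hlam j2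
  exact (continuous_const.mul ((((h0.mul h1).mul h2).mul continuous_const).add
    (hci.mul ((((h1.mul h2).mul continuous_const).add
      ((h0.mul h2).mul continuous_const)).add ((h0.mul h1).mul continuous_const))))).neg

/-- Averaged normal-derivative moments `f_k(v) = ⨍_{e_k} ∂ₙ v` used for FE_ec,
evaluated on the cubic bubbles `λ_i²λ_{i+1} - λ_iλ_{i+1}²` and on `λ_i Λ`. -/
theorem FE_ec_f_moments
    (a : Fin 3 → Pt) (ha : AffineIndependent ℝ a)
    (g : Fin 3 → Pt) (c : Fin 3 → ℝ) (lam : Fin 3 → Pt → ℝ)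
    (hlam : ∀ i x, lam i x = ⟪g i, x⟫ + c i)
    (hdual : ∀ i j, lam i (a j) = if i = j then 1 else 0) :
    ∀ i k : Fin 3,
      (k = i → edgeAvg a k (nderiv g k
        (fun x => lam i x ^ 2 * lam (i+1) x - lam i x * lam (i+1) x ^ 2)) =
          (1/3) * ‖g k‖) ∧
      (k = i + 1 → edgeAvg a k (nderiv g k
        (fun x => lam i x ^ 2 * lam (i+1) x - lam i x * lam (i+1) x ^ 2)) =
          -(1/3) * ‖g k‖) ∧
      (k = i + 2 → edgeAvg a k (nderiv g k
        (fun x => lam i x ^ 2 * lam (i+1) x - lam i x * lam (i+1) x ^ 2)) = 0) ∧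
      (k = i → edgeAvg a k (nderiv g k
        (fun x => lam i x * (lam 0 x * lam 1 x * lam 2 x))) = 0) ∧
      (k ≠ i → edgeAvg a k (nderiv g k
        (fun x => lam i x * (lam 0 x * lam 1 x * lam 2 x))) = -(1/12) * ‖g k‖) := by
  have d1 : ∀ m : Fin 3, m ≠ m + 1 := by decide
  have d2 : ∀ m : Fin 3, m ≠ m + 2 := by decide
  have d3 : ∀ m : Fin 3, m + 1 ≠ m + 2 := by decide
  have d3' : ∀ m : Fin 3, m + 2 ≠ m + 1 := by decide
  have dA : ∀ m : Fin 3, m + 1 + 1 = m + 2 := by decide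
  have dB : ∀ m : Fin 3, m + 2 + 1 = m := by decide
  -- generic facts about the edge opposite `k`
  have hpq : ∀ k : Fin 3, a (k+1) ≠ a (k+2) := by
    intro k h
    have h1 := hdual (k+1) (k+1)
    have h2 := hdual (k+1) (k+2)
    rw [if_pos rfl] at h1
    rw [if_neg (d3 k), ← h] at h2
    exact one_ne_zero (h1.symm.trans h2)
  have hgk : ∀ k : Fin 3, ‖g k‖ ≠ 0 := by
    intro k hn
    have h1 := hdual k k
    have h2 := hdual k (k+1)
    rw [if_pos rfl, hlam] at h1
    rw [if_neg (d1 k), hlam] at h2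
    rw [norm_eq_zero.mp hn] at h1 h2
    simp only [inner_zero_left, zero_add] at h1 h2
    exact one_ne_zero (h1.symm.trans h2)
  have lamA : ∀ (k : Fin 3) (t : ℝ), lam k (AffineMap.lineMap (a (k+1)) (a (k+2)) t) = 0 := by
    intro k t
    rw [FEaux_lam_lineMap hlam, hdual, hdual, if_neg (d1 k), if_neg (d2 k)]; ring
  have lamB : ∀ (k : Fin 3) (t : ℝ),
      lam (k+1) (AffineMap.lineMap (a (k+1)) (a (k+2)) t) = 1 - t := by
    intro k t
    rw [FEaux_lam_lineMap hlam, hdual, hdual, if_pos rfl, if_neg (d3 k)]; ring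
  have lamC : ∀ (k : Fin 3) (t : ℝ),
      lam (k+2) (AffineMap.lineMap (a (k+1)) (a (k+2)) t) = t := by
    intro k t
    rw [FEaux_lam_lineMap hlam, hdual, hdual, if_neg (d3' k), if_pos rfl]; ring
  intro i k
  refine ⟨?_, ?_, ?_, ?_, ?_⟩
  · -- k = i
    intro h; subst h
    have hfun : nderiv g k (fun x => lam k x ^ 2 * lam (k+1) x - lam k x * lam (k+1) x ^ 2)
        = fun x => -(‖g k‖⁻¹ * ((2 * lam k x * lam (k+1) x - lam (k+1) x ^ 2) * ⟪g k, g k⟫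
          + (lam k x ^ 2 - 2 * lam k x * lam (k+1) x) * ⟪g (k+1), g k⟫)) :=
      funext fun x => FEaux_nderiv_v1 hlam k (k+1) k x
    unfold edgeAvg
    rw [hfun, FEaux_segment_average _ _ (hpq k) _ (FEaux_cont_poly2 hlam k (k+1) k)]
    rw [FEaux_int01 _ (‖g k‖⁻¹ * ⟪g k, g k⟫) (-(2 * (‖g k‖⁻¹ * ⟪g k, g k⟫)))
      (‖g k‖⁻¹ * ⟪g k, g k⟫) 0 (fun t => by
        simp only [lamA, lamB, lamC]; ring)]
    rw [real_inner_self_eq_norm_sq]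
    have hN : ‖g k‖⁻¹ * ‖g k‖ ^ 2 = ‖g k‖ := by
      rw [pow_two, ← mul_assoc, inv_mul_cancel₀ (hgk k), one_mul]
    simp only [hN]
    ring
  · -- k = i + 1, so i = k + 2
    intro h
    have hi : i = k + 2 := by rw [h]; exact ((by decide : ∀ m : Fin 3, m = m + 1 + 2) i)
    subst hi
    have hfun : nderiv g k (fun x => lam (k+2) x ^ 2 * lam (k+2+1) x
          - lam (k+2) x * lam (k+2+1) x ^ 2)
        = fun x => -(‖g k‖⁻¹ * ((2 * lam (k+2) x * lam (k+2+1) x - lam (k+2+1) x ^ 2) * ⟪g (k+2), g k⟫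
          + (lam (k+2) x ^ 2 - 2 * lam (k+2) x * lam (k+2+1) x) * ⟪g (k+2+1), g k⟫)) :=
      funext fun x => FEaux_nderiv_v1 hlam (k+2) (k+2+1) k x
    unfold edgeAvg
    rw [hfun, FEaux_segment_average _ _ (hpq k) _ (FEaux_cont_poly2 hlam (k+2) (k+2+1) k)]
    rw [FEaux_int01 _ 0 0 (-(‖g k‖⁻¹ * ⟪g k, g k⟫)) 0 (fun t => by
        simp only [dB, lamA, lamB, lamC]; ring)]
    rw [real_inner_self_eq_norm_sq]
    have hN : ‖g k‖⁻¹ * ‖g k‖ ^ 2 = ‖g k‖ := by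
      rw [pow_two, ← mul_assoc, inv_mul_cancel₀ (hgk k), one_mul]
    simp only [hN]
    ring
  · -- k = i + 2, so i = k + 1
    intro h
    have hi : i = k + 1 := by rw [h]; exact ((by decide : ∀ m : Fin 3, m = m + 2 + 1) i)
    subst hi
    have hfun : nderiv g k (fun x => lam (k+1) x ^ 2 * lam (k+1+1) x
          - lam (k+1) x * lam (k+1+1) x ^ 2)
        = fun x => -(‖g k‖⁻¹ * ((2 * lam (k+1) x * lam (k+1+1) x - lam (k+1+1) x ^ 2) * ⟪g (k+1), g k⟫
          + (lam (k+1) x ^ 2 - 2 * lam (k+1) x * lam (k+1+1) x) * ⟪g (k+1+1), g k⟫)) :=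
      funext fun x => FEaux_nderiv_v1 hlam (k+1) (k+1+1) k x
    unfold edgeAvg
    rw [hfun, FEaux_segment_average _ _ (hpq k) _ (FEaux_cont_poly2 hlam (k+1) (k+1+1) k)]
    rw [FEaux_int01 _ (-(‖g k‖⁻¹ * ⟪g (k+1+1), g k⟫))
      ((-(2 * (‖g k‖⁻¹ * ⟪g (k+1), g k⟫))) + 4 * (‖g k‖⁻¹ * ⟪g (k+1+1), g k⟫))
      (3 * (‖g k‖⁻¹ * ⟪g (k+1), g k⟫) - 3 * (‖g k‖⁻¹ * ⟪g (k+1+1), g k⟫)) 0 (fun t => by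
        simp only [dA, lamA, lamB, lamC]; ring)]
    ring
  · -- v2, k = i
    intro h; subst h
    have hsw : (fun x => lam k x * (lam 0 x * lam 1 x * lam 2 x))
        = fun x => lam k x * (lam k x * lam (k+1) x * lam (k+2) x) := by
      funext x; rw [FEaux_prod_shift lam k x]
    rw [hsw]
    have hfun : nderiv g k (fun x => lam k x * (lam k x * lam (k+1) x * lam (k+2) x))
        = fun x => -(‖g k‖⁻¹ * ((lam k x * lam (k+1) x * lam (k+2) x) * ⟪g k, g k⟫
          + lam k x * ((lam (k+1) x * lam (k+2) x) * ⟪g k, g k⟫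
            + (lam k x * lam (k+2) x) * ⟪g (k+1), g k⟫
            + (lam k x * lam (k+1) x) * ⟪g (k+2), g k⟫))) :=
      funext fun x => FEaux_nderiv_v2 hlam k k (k+1) (k+2) k x
    unfold edgeAvg
    rw [hfun, FEaux_segment_average _ _ (hpq k) _ (FEaux_cont_poly3 hlam k k (k+1) (k+2) k)]
    rw [FEaux_int01 _ 0 0 0 0 (fun t => by
        simp only [lamA, lamB, lamC]; ring)]
    norm_num
  · -- v2, k ≠ i
    intro h
    have hi := (by decide : ∀ i k : Fin 3, k ≠ i → i = k + 1 ∨ i = k + 2) i k h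
    rcases hi with hi | hi <;> subst hi
    · have hsw : (fun x => lam (k+1) x * (lam 0 x * lam 1 x * lam 2 x))
          = fun x => lam (k+1) x * (lam k x * lam (k+1) x * lam (k+2) x) := by
        funext x; rw [FEaux_prod_shift lam k x]
      rw [hsw]
      have hfun : nderiv g k (fun x => lam (k+1) x * (lam k x * lam (k+1) x * lam (k+2) x))
          = fun x => -(‖g k‖⁻¹ * ((lam k x * lam (k+1) x * lam (k+2) x) * ⟪g (k+1), g k⟫
            + lam (k+1) x * ((lam (k+1) x * lam (k+2) x) * ⟪g k, g k⟫
              + (lam k x * lam (k+2) x) * ⟪g (k+1), g k⟫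
              + (lam k x * lam (k+1) x) * ⟪g (k+2), g k⟫))) :=
        funext fun x => FEaux_nderiv_v2 hlam (k+1) k (k+1) (k+2) k x
      unfold edgeAvg
      rw [hfun, FEaux_segment_average _ _ (hpq k) _ (FEaux_cont_poly3 hlam (k+1) k (k+1) (k+2) k)]
      rw [FEaux_int01 _ 0 (-(‖g k‖⁻¹ * ⟪g k, g k⟫)) (2 * (‖g k‖⁻¹ * ⟪g k, g k⟫))
        (-(‖g k‖⁻¹ * ⟪g k, g k⟫)) (fun t => by
          simp only [lamA, lamB, lamC]; ring)]
      rw [real_inner_self_eq_norm_sq]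
      have hN : ‖g k‖⁻¹ * ‖g k‖ ^ 2 = ‖g k‖ := by
        rw [pow_two, ← mul_assoc, inv_mul_cancel₀ (hgk k), one_mul]
      simp only [hN]
      ring
    · have hsw : (fun x => lam (k+2) x * (lam 0 x * lam 1 x * lam 2 x))
          = fun x => lam (k+2) x * (lam k x * lam (k+1) x * lam (k+2) x) := by
        funext x; rw [FEaux_prod_shift lam k x]
      rw [hsw]
      have hfun : nderiv g k (fun x => lam (k+2) x * (lam k x * lam (k+1) x * lam (k+2) x))
          = fun x => -(‖g k‖⁻¹ * ((lam k x * lam (k+1) x * lam (k+2) x) * ⟪g (k+2), g k⟫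
            + lam (k+2) x * ((lam (k+1) x * lam (k+2) x) * ⟪g k, g k⟫
              + (lam k x * lam (k+2) x) * ⟪g (k+1), g k⟫
              + (lam k x * lam (k+1) x) * ⟪g (k+2), g k⟫))) :=
        funext fun x => FEaux_nderiv_v2 hlam (k+2) k (k+1) (k+2) k x
      unfold edgeAvg
      rw [hfun, FEaux_segment_average _ _ (hpq k) _ (FEaux_cont_poly3 hlam (k+2) k (k+1) (k+2) k)]
      rw [FEaux_int01 _ 0 0 (-(‖g k‖⁻¹ * ⟪g k, g k⟫)) (‖g k‖⁻¹ * ⟪g k, g k⟫) (fun t => by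
          simp only [lamA, lamB, lamC]; ring)]
      rw [real_inner_self_eq_norm_sq]
      have hN : ‖g k‖⁻¹ * ‖g k‖ ^ 2 = ‖g k‖ := by
        rw [pow_two, ← mul_assoc, inv_mul_cancel₀ (hgk k), one_mul]
      simp only [hN]
      ring
end
end

section
/- Weighted normal-derivative moments used for FE_ec: define g_k(v) = ⨍_{e_k} (1/2 − λ_{k+1}) ∂_n v for k = 1,2,3. Then for all i, k ∈ {1,2,3}: g_k(λ_i²λ_{i+1} − λ_iλ_{i+1}²) = −(1/12)‖∇λ_k‖; and g_k(λ_i Λ) = 0 if k ≡ i (mod 3), = −(1/120)‖∇λ_k‖ if k ≡ i+1 (mod 3), and = (1/120)‖∇λ_k‖ if k ≡ i+2 (mod 3). -/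
open MeasureTheory
open scoped RealInnerProductSpace

noncomputable section

/-! ### Auxiliary lemmas -/

lemma segment_integral (p q : Pt) (hpq : p ≠ q) (f : Pt → ℝ) (hf : Continuous f) :
    ∫ x in segment ℝ p q, f x ∂(μH[1]) = ‖q - p‖ * ∫ t in (0:ℝ)..1, f (p + t • (q - p)) := by
  set L : ℝ := ‖q - p‖ with hL
  have hL0 : L ≠ 0 := by simp [hL, sub_eq_zero, hpq.symm]
  have hLpos : 0 < L := lt_of_le_of_ne (norm_nonneg _) (Ne.symm hL0)
  set u : Pt := L⁻¹ • (q - p) with hu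
  have hu1 : ‖u‖ = 1 := by
    rw [hu, norm_smul, norm_inv, norm_norm, ← hL, inv_mul_cancel₀ hL0]
  set A : ℝ → Pt := fun t => p + t • u with hA
  have hAiso : Isometry A := by
    apply Isometry.of_dist_eq
    intro s t
    simp only [hA, dist_eq_norm, Real.dist_eq]
    rw [add_sub_add_left_eq_sub, ← sub_smul, norm_smul, hu1, mul_one, Real.norm_eq_abs]
  have hALt : ∀ t : ℝ, A (L * t) = p + t • (q - p) := by
    intro t
    simp only [hA, hu, smul_smul]
    congr 1
    rw [mul_comm L t, mul_assoc, mul_inv_cancel₀ hL0, mul_one]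
  have himg : segment ℝ p q = A '' Set.Icc 0 L := by
    rw [segment_eq_image']
    ext x
    constructor
    · rintro ⟨t, ht, rfl⟩
      exact ⟨L * t, ⟨mul_nonneg hLpos.le ht.1, by nlinarith [ht.1, ht.2]⟩, hALt t⟩
    · rintro ⟨s, hs, rfl⟩
      refine ⟨s / L, ⟨div_nonneg hs.1 hLpos.le, by rw [div_le_one hLpos]; exact hs.2⟩, ?_⟩
      have h2 : A s = p + (s / L) • (q - p) := by
        rw [← hALt (s / L), mul_div_cancel₀ _ hL0]
      exact h2.symm
  have hms : MeasurableSet (A '' Set.Icc 0 L) :=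
    ((isCompact_Icc.image hAiso.continuous).isClosed).measurableSet
  have hmap : Measure.map A (μH[1] : Measure ℝ) = (μH[1] : Measure Pt).restrict (Set.range A) :=
    hAiso.map_hausdorffMeasure (Or.inl zero_le_one)
  have h1 : (Measure.map A (μH[1] : Measure ℝ)).restrict (A '' Set.Icc 0 L)
      = (μH[1] : Measure Pt).restrict (A '' Set.Icc 0 L) := by
    rw [hmap, Measure.restrict_restrict hms,
      Set.inter_eq_self_of_subset_left (Set.image_subset_range _ _)]
  have h2 : (Measure.map A (μH[1] : Measure ℝ)).restrict (A '' Set.Icc 0 L)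
      = Measure.map A ((μH[1] : Measure ℝ).restrict (Set.Icc 0 L)) := by
    rw [Measure.restrict_map hAiso.continuous.measurable hms,
      Set.preimage_image_eq _ hAiso.injective]
  have key : ∫ x in segment ℝ p q, f x ∂(μH[1]) = ∫ t in Set.Icc (0:ℝ) L, f (A t) := by
    calc ∫ x in segment ℝ p q, f x ∂(μH[1])
        = ∫ x, f x ∂((μH[1] : Measure Pt).restrict (A '' Set.Icc 0 L)) := by rw [himg]
      _ = ∫ x, f x ∂(Measure.map A ((μH[1] : Measure ℝ).restrict (Set.Icc 0 L))) := by
            rw [← h1, h2]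
      _ = ∫ t in Set.Icc (0:ℝ) L, f (A t) ∂(μH[1]) := by
            rw [integral_map hAiso.continuous.aemeasurable hf.aestronglyMeasurable]
      _ = ∫ t in Set.Icc (0:ℝ) L, f (A t) := by rw [hausdorffMeasure_real]
  rw [key]
  have hcv : ∫ t in (0:ℝ)..1, f (p + t • (q - p)) = L⁻¹ * ∫ s in (0:ℝ)..L, f (A s) := by
    have := intervalIntegral.integral_comp_mul_left (a := (0:ℝ)) (b := 1) (fun s => f (A s)) hL0
    simp only [mul_zero, mul_one, smul_eq_mul] at this
    rw [← this]
    exact intervalIntegral.integral_congr fun t _ => by rw [hALt]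
  rw [hcv, ← mul_assoc, mul_inv_cancel₀ hL0, one_mul,
    intervalIntegral.integral_of_le hLpos.le, MeasureTheory.integral_Icc_eq_integral_Ioc]

lemma avg_segment (p q : Pt) (hpq : p ≠ q) (F : ℝ → ℝ) (hF : Continuous F) (f : Pt → ℝ)
    (hf : ∀ t ∈ Set.Icc (0:ℝ) 1, f (p + t • (q - p)) = F t) :
    (⨍ x in segment ℝ p q, f x ∂(μH[1])) = ∫ t in (0:ℝ)..1, F t := by
  set L : ℝ := ‖q - p‖ with hL
  have hL0 : L ≠ 0 := by simp [hL, sub_eq_zero, hpq.symm]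
  set τ : Pt → ℝ := fun x => ⟪q - p, x - p⟫ / L ^ 2 with hτ
  have hτc : Continuous τ := by
    apply Continuous.div_const
    exact (continuous_const.inner (continuous_id.sub continuous_const))
  have hτval : ∀ t : ℝ, τ (p + t • (q - p)) = t := by
    intro t
    simp only [hτ, add_sub_cancel_left, inner_smul_right]
    rw [real_inner_self_eq_norm_sq, ← hL]
    field_simp
  have hEq : Set.EqOn f (fun x => F (τ x)) (segment ℝ p q) := by
    intro x hx
    rw [segment_eq_image'] at hx
    obtain ⟨t, ht, rfl⟩ := hx
    simp only [hτval t]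
    exact hf t ht
  have hmsSeg : MeasurableSet (segment ℝ p q) := by
    rw [segment_eq_image']
    exact ((isCompact_Icc.image (by continuity)).isClosed).measurableSet
  have hint : ∫ x in segment ℝ p q, f x ∂(μH[1])
      = ∫ x in segment ℝ p q, F (τ x) ∂(μH[1]) :=
    setIntegral_congr_fun hmsSeg hEq
  have hseg : (μH[1] (segment ℝ p q)).toReal = L := by
    rw [hausdorffMeasure_segment, edist_dist, ENNReal.toReal_ofReal dist_nonneg,
      dist_eq_norm, hL, norm_sub_rev]
  rw [setAverage_eq, hint, segment_integral p q hpq (fun x => F (τ x)) (hF.comp hτc), measureReal_def, hseg,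
    smul_eq_mul, ← mul_assoc, inv_mul_cancel₀ hL0, one_mul]
  exact intervalIntegral.integral_congr fun t _ => by simp [hτval t]

lemma poly_int (c0 c1 c2 c3 c4 : ℝ) :
    ∫ t in (0:ℝ)..1, (c0 + c1*t + c2*t^2 + c3*t^3 + c4*t^4)
      = c0 + c1/2 + c2/3 + c3/4 + c4/5 := by
  have hd : ∀ t ∈ Set.uIcc (0:ℝ) 1,
      HasDerivAt (fun s : ℝ => c0*s^1 + c1/2*s^2 + c2/3*s^3 + c3/4*s^4 + c4/5*s^5)
        (c0 + c1*t + c2*t^2 + c3*t^3 + c4*t^4) t := by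
    intro t _
    have h := (((((hasDerivAt_pow 1 t).const_mul c0).add
      ((hasDerivAt_pow 2 t).const_mul (c1/2))).add
      ((hasDerivAt_pow 3 t).const_mul (c2/3))).add
      ((hasDerivAt_pow 4 t).const_mul (c3/4))).add
      ((hasDerivAt_pow 5 t).const_mul (c4/5))
    refine h.congr_deriv ?_
    norm_num
    ring
  have hint : IntervalIntegrable (fun t : ℝ => c0 + c1*t + c2*t^2 + c3*t^3 + c4*t^4)
      volume 0 1 :=
    (by continuity : Continuous fun t : ℝ =>
      c0 + c1*t + c2*t^2 + c3*t^3 + c4*t^4).intervalIntegrable _ _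
  rw [intervalIntegral.integral_eq_sub_of_hasDerivAt hd hint]
  norm_num

lemma cyc3 {M : Type*} [CommMonoid M] (k : Fin 3) (r : Fin 3 → M) :
    r k * r (k+1) * r (k+2) = r 0 * r 1 * r 2 := by
  have h2 : ∏ j, r (k + j) = ∏ j, r j :=
    Fintype.prod_equiv (Equiv.addLeft k) _ _ (fun j => rfl)
  rw [Fin.prod_univ_three, Fin.prod_univ_three] at h2
  rw [add_zero] at h2
  exact h2

lemma cyc3_add {M : Type*} [AddCommMonoid M] (k : Fin 3) (r : Fin 3 → M) :
    r k + r (k+1) + r (k+2) = r 0 + r 1 + r 2 := by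
  have h2 : ∑ j, r (k + j) = ∑ j, r j :=
    Fintype.sum_equiv (Equiv.addLeft k) _ _ (fun j => rfl)
  rw [Fin.sum_univ_three, Fin.sum_univ_three] at h2
  rw [add_zero] at h2
  exact h2

lemma gsum (a : Fin 3 → Pt) (g : Fin 3 → Pt) (c : Fin 3 → ℝ) (lam : Fin 3 → Pt → ℝ)
    (hlam : ∀ i x, lam i x = ⟪g i, x⟫ + c i)
    (hdual : ∀ i j, lam i (a j) = if i = j then 1 else 0) :
    g 0 + g 1 + g 2 = 0 := by
  set s : Pt := g 0 + g 1 + g 2 with hs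
  have hdiff : ∀ (m j l : Fin 3), ⟪g m, a j - a l⟫ = lam m (a j) - lam m (a l) := by
    intro m j l
    rw [inner_sub_right, hlam m (a j), hlam m (a l)]
    ring
  have hval : ∀ m j : Fin 3, ⟪g m, a j - a 0⟫
      = (if m = j then (1:ℝ) else 0) - (if m = 0 then 1 else 0) := by
    intro m j; rw [hdiff, hdual, hdual]
  have hsu : ∀ j : Fin 3, ⟪s, a j - a 0⟫ = 0 := by
    intro j
    rw [hs, inner_add_left, inner_add_left, hval, hval, hval]
    fin_cases j <;> simp
  have hli : LinearIndependent ℝ ![a 1 - a 0, a 2 - a 0] := by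
    rw [LinearIndependent.pair_iff]
    intro r t hrt
    have e1 : ⟪g 1, r • (a 1 - a 0) + t • (a 2 - a 0)⟫ = r := by
      rw [inner_add_right, inner_smul_right, inner_smul_right, hval, hval]
      simp
    have e2 : ⟪g 2, r • (a 1 - a 0) + t • (a 2 - a 0)⟫ = t := by
      rw [inner_add_right, inner_smul_right, inner_smul_right, hval, hval]
      simp
    rw [hrt] at e1 e2
    simp only [inner_zero_right] at e1 e2
    exact ⟨e1.symm, e2.symm⟩
  have hspan : Submodule.span ℝ (Set.range ![a 1 - a 0, a 2 - a 0]) = ⊤ := by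
    apply hli.span_eq_top_of_card_eq_finrank
    simp [finrank_euclideanSpace_fin]
  have hmem : s ∈ Submodule.span ℝ (Set.range ![a 1 - a 0, a 2 - a 0]) := by
    rw [hspan]; trivial
  rw [Submodule.mem_span_range_iff_exists_fun] at hmem
  obtain ⟨co, hco⟩ := hmem
  have hco' : co 0 • (a 1 - a 0) + co 1 • (a 2 - a 0) = s := by
    rw [← hco, Fin.sum_univ_two]
    simp
  have hzero : ⟪s, s⟫ = 0 := by
    nth_rewrite 2 [← hco']
    rw [inner_add_right, inner_smul_right, inner_smul_right, hsu 1, hsu 2]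
    ring
  exact inner_self_eq_zero.mp hzero

lemma hasFDerivAt_lam (g : Fin 3 → Pt) (c : Fin 3 → ℝ) (lam : Fin 3 → Pt → ℝ)
    (hlam : ∀ i x, lam i x = ⟪g i, x⟫ + c i) (j : Fin 3) (x : Pt) :
    HasFDerivAt (lam j) (innerSL ℝ (g j)) x := by
  have : lam j = fun y => ⟪g j, y⟫ + c j := funext fun y => hlam j y
  rw [this]
  exact ((innerSL ℝ (g j)).hasFDerivAt).add_const (c j)

lemma nderiv_fderiv (g : Fin 3 → Pt) (k : Fin 3) (v : Pt → ℝ) (x : Pt) :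
    nderiv g k v x = fderiv ℝ v x (-(‖g k‖⁻¹ • g k)) := by
  rw [nderiv, gradient, InnerProductSpace.toDual_symm_apply]

lemma nderiv_bubble (g : Fin 3 → Pt) (c : Fin 3 → ℝ) (lam : Fin 3 → Pt → ℝ)
    (hlam : ∀ i x, lam i x = ⟪g i, x⟫ + c i) (i k : Fin 3) (x : Pt) :
    nderiv g k (fun y => lam i y ^ 2 * lam (i+1) y - lam i y * lam (i+1) y ^ 2) x =
      (2 * lam i x * lam (i+1) x - lam (i+1) x ^ 2) * ⟪g i, -(‖g k‖⁻¹ • g k)⟫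
      + (lam i x ^ 2 - 2 * lam i x * lam (i+1) x) * ⟪g (i+1), -(‖g k‖⁻¹ • g k)⟫ := by
  have hrw : (fun y => lam i y ^ 2 * lam (i+1) y - lam i y * lam (i+1) y ^ 2) =
      fun y => lam i y * lam i y * lam (i+1) y - lam i y * (lam (i+1) y * lam (i+1) y) := by
    funext y; ring
  have h1 := hasFDerivAt_lam g c lam hlam i x
  have h2 := hasFDerivAt_lam g c lam hlam (i+1) x
  have hv : HasFDerivAt (fun y => lam i y * lam i y * lam (i+1) y
      - lam i y * (lam (i+1) y * lam (i+1) y)) _ x :=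
    ((h1.mul h1).mul h2).sub (h1.mul (h2.mul h2))
  rw [nderiv_fderiv, hrw, hv.fderiv]
  simp only [ContinuousLinearMap.coe_sub', Pi.sub_apply, ContinuousLinearMap.add_apply,
    ContinuousLinearMap.coe_smul', Pi.smul_apply, innerSL_apply_apply, smul_eq_mul, Pi.mul_apply]
  ring

lemma nderiv_prod4 (g : Fin 3 → Pt) (c : Fin 3 → ℝ) (lam : Fin 3 → Pt → ℝ)
    (hlam : ∀ i x, lam i x = ⟪g i, x⟫ + c i) (j1 j2 j3 j4 k : Fin 3) (x : Pt) :
    nderiv g k (fun y => lam j1 y * (lam j2 y * lam j3 y * lam j4 y)) x =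
      (lam j2 x * lam j3 x * lam j4 x) * ⟪g j1, -(‖g k‖⁻¹ • g k)⟫
      + (lam j1 x * lam j3 x * lam j4 x) * ⟪g j2, -(‖g k‖⁻¹ • g k)⟫
      + (lam j1 x * lam j2 x * lam j4 x) * ⟪g j3, -(‖g k‖⁻¹ • g k)⟫
      + (lam j1 x * lam j2 x * lam j3 x) * ⟪g j4, -(‖g k‖⁻¹ • g k)⟫ := by
  have h1 := hasFDerivAt_lam g c lam hlam j1 x
  have h2 := hasFDerivAt_lam g c lam hlam j2 x
  have h3 := hasFDerivAt_lam g c lam hlam j3 x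
  have h4 := hasFDerivAt_lam g c lam hlam j4 x
  have hv : HasFDerivAt (fun y => lam j1 y * (lam j2 y * lam j3 y * lam j4 y)) _ x :=
    h1.mul ((h2.mul h3).mul h4)
  rw [nderiv_fderiv, hv.fderiv]
  simp only [ContinuousLinearMap.coe_sub', Pi.sub_apply, ContinuousLinearMap.add_apply,
    ContinuousLinearMap.coe_smul', Pi.smul_apply, innerSL_apply_apply, smul_eq_mul, Pi.mul_apply]
  ring

lemma edge_lam (g : Fin 3 → Pt) (c : Fin 3 → ℝ) (lam : Fin 3 → Pt → ℝ)
    (hlam : ∀ i x, lam i x = ⟪g i, x⟫ + c i) (j : Fin 3) (p q : Pt) (t : ℝ) :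
    lam j (p + t • (q - p)) = (1 - t) * lam j p + t * lam j q := by
  rw [hlam, hlam, hlam, inner_add_right, inner_smul_right, inner_sub_right]
  ring

/-- Weighted normal-derivative moments `g_k(v) = ⨍_{e_k} (1/2 - λ_{k+1}) ∂ₙ v`
used for FE_ec, evaluated on the cubic bubbles `λ_i²λ_{i+1} - λ_iλ_{i+1}²`
and on `λ_i Λ`. -/
theorem FE_ec_g_moments
    (a : Fin 3 → Pt) (ha : AffineIndependent ℝ a)
    (g : Fin 3 → Pt) (c : Fin 3 → ℝ) (lam : Fin 3 → Pt → ℝ)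
    (hlam : ∀ i x, lam i x = ⟪g i, x⟫ + c i)
    (hdual : ∀ i j, lam i (a j) = if i = j then 1 else 0) :
    ∀ i k : Fin 3,
      (edgeAvg a k (fun x => (1/2 - lam (k+1) x) * nderiv g k
        (fun y => lam i y ^ 2 * lam (i+1) y - lam i y * lam (i+1) y ^ 2) x) =
          -(1/12) * ‖g k‖) ∧
      (k = i → edgeAvg a k (fun x => (1/2 - lam (k+1) x) * nderiv g k
        (fun y => lam i y * (lam 0 y * lam 1 y * lam 2 y)) x) = 0) ∧
      (k = i + 1 → edgeAvg a k (fun x => (1/2 - lam (k+1) x) * nderiv g k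
        (fun y => lam i y * (lam 0 y * lam 1 y * lam 2 y)) x) = -(1/120) * ‖g k‖) ∧
      (k = i + 2 → edgeAvg a k (fun x => (1/2 - lam (k+1) x) * nderiv g k
        (fun y => lam i y * (lam 0 y * lam 1 y * lam 2 y)) x) = (1/120) * ‖g k‖) := by
  -- index arithmetic facts
  have d1 : ∀ k : Fin 3, k ≠ k+1 := by decide
  have d2 : ∀ k : Fin 3, k ≠ k+2 := by decide
  have d3 : ∀ k : Fin 3, k+1 ≠ k+2 := by decide
  have e11 : ∀ k : Fin 3, k+1+1 = k+2 := by decide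
  have e21 : ∀ k : Fin 3, k+2+1 = k := by decide
  have e12 : ∀ k : Fin 3, k+1+2 = k := by decide
  have e22 : ∀ k : Fin 3, k+2+2 = k+1 := by decide
  -- distinct edge endpoints
  have hpq : ∀ k : Fin 3, a (k+1) ≠ a (k+2) := by
    intro k h
    have h1 := hdual (k+1) (k+1)
    have h2 := hdual (k+1) (k+2)
    rw [if_pos rfl] at h1
    rw [if_neg (d3 k)] at h2
    rw [h] at h1
    rw [h1] at h2
    exact one_ne_zero h2
  -- barycentric coordinates along the edge e_k
  have hE0 : ∀ (k : Fin 3) (t : ℝ), lam k (a (k+1) + t • (a (k+2) - a (k+1))) = 0 := by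
    intro k t
    rw [edge_lam g c lam hlam, hdual, hdual, if_neg (d1 k), if_neg (d2 k)]
    ring
  have hE1 : ∀ (k : Fin 3) (t : ℝ), lam (k+1) (a (k+1) + t • (a (k+2) - a (k+1))) = 1 - t := by
    intro k t
    rw [edge_lam g c lam hlam, hdual, hdual, if_pos rfl, if_neg (d3 k)]
    ring
  have hE2 : ∀ (k : Fin 3) (t : ℝ), lam (k+2) (a (k+1) + t • (a (k+2) - a (k+1))) = t := by
    intro k t
    rw [edge_lam g c lam hlam, hdual, hdual, if_pos rfl, if_neg (Ne.symm (d3 k))]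
    ring
  -- inner products with the (unnormalized) inward normal
  have hBk : ∀ k : Fin 3, ⟪g k, -(‖g k‖⁻¹ • g k)⟫ = -‖g k‖ := by
    intro k
    rcases eq_or_ne (g k) 0 with h | h
    · simp [h]
    · rw [inner_neg_right, inner_smul_right, real_inner_self_eq_norm_sq, pow_two,
        ← mul_assoc, inv_mul_cancel₀ (norm_ne_zero_iff.mpr h), one_mul]
  have hgsum := gsum a g c lam hlam hdual
  have hBsum : ∀ k : Fin 3,
      ⟪g (k+1), -(‖g k‖⁻¹ • g k)⟫ + ⟪g (k+2), -(‖g k‖⁻¹ • g k)⟫ = ‖g k‖ := by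
    intro k
    have h3 : g k + g (k+1) + g (k+2) = 0 := by rw [cyc3_add k g, hgsum]
    have h4 : g (k+1) + g (k+2) = -(g k) := by
      rw [add_assoc] at h3
      have h5 : (g (k+1) + g (k+2)) + g k = 0 := by rw [add_comm]; exact h3
      exact eq_neg_of_add_eq_zero_left h5
    rw [← inner_add_left, h4, inner_neg_left, hBk k]
    ring
  -- the six moment computations
  have HB1 : ∀ k : Fin 3, edgeAvg a k (fun x => (1/2 - lam (k+1) x) * nderiv g k
      (fun y => lam k y ^ 2 * lam (k+1) y - lam k y * lam (k+1) y ^ 2) x)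
      = -(1/12) * ‖g k‖ := by
    intro k
    unfold edgeAvg
    refine (avg_segment _ _ (hpq k) (fun t => (t - 1/2) * (1-t)^2 * ‖g k‖)
      (by fun_prop) _ ?_).trans ?_
    · intro t _
      rw [nderiv_bubble g c lam hlam k k, hE0 k t, hE1 k t, hBk k]
      ring
    · have h := intervalIntegral.integral_congr (μ := volume) (a := (0:ℝ)) (b := 1)
        (f := fun t => (t - 1/2) * (1-t)^2 * ‖g k‖)
        (g := fun t => (-1/2*‖g k‖) + (2*‖g k‖)*t + (-5/2*‖g k‖)*t^2 + (1*‖g k‖)*t^3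
          + 0*t^4) (fun t _ => by ring)
      rw [h, poly_int]
      ring
  have HB2 : ∀ k : Fin 3, edgeAvg a k (fun x => (1/2 - lam (k+1) x) * nderiv g k
      (fun y => lam (k+1) y ^ 2 * lam (k+1+1) y - lam (k+1) y * lam (k+1+1) y ^ 2) x)
      = -(1/12) * ‖g k‖ := by
    intro k
    unfold edgeAvg
    refine (avg_segment _ _ (hpq k)
      (fun t => (t - 1/2) * ((2*(1-t)*t - t^2) * ⟪g (k+1), -(‖g k‖⁻¹ • g k)⟫
        + ((1-t)^2 - 2*(1-t)*t) * ⟪g (k+2), -(‖g k‖⁻¹ • g k)⟫))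
      (by fun_prop) _ ?_).trans ?_
    · intro t _
      rw [nderiv_bubble g c lam hlam (k+1) k, e11 k, hE1 k t, hE2 k t]
      ring
    · have h := intervalIntegral.integral_congr (μ := volume) (a := (0:ℝ)) (b := 1)
        (f := fun t => (t - 1/2) * ((2*(1-t)*t - t^2) * ⟪g (k+1), -(‖g k‖⁻¹ • g k)⟫
          + ((1-t)^2 - 2*(1-t)*t) * ⟪g (k+2), -(‖g k‖⁻¹ • g k)⟫))
        (g := fun t => ((-1/2)*⟪g (k+2), -(‖g k‖⁻¹ • g k)⟫)
          + ((-1)*⟪g (k+1), -(‖g k‖⁻¹ • g k)⟫ + 3*⟪g (k+2), -(‖g k‖⁻¹ • g k)⟫)*t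
          + ((7/2)*⟪g (k+1), -(‖g k‖⁻¹ • g k)⟫ + (-11/2)*⟪g (k+2), -(‖g k‖⁻¹ • g k)⟫)*t^2
          + ((-3)*⟪g (k+1), -(‖g k‖⁻¹ • g k)⟫ + 3*⟪g (k+2), -(‖g k‖⁻¹ • g k)⟫)*t^3
          + 0*t^4) (fun t _ => by ring)
      rw [h, poly_int]
      linear_combination (-(1:ℝ)/12) * hBsum k
  have HB3 : ∀ k : Fin 3, edgeAvg a k (fun x => (1/2 - lam (k+1) x) * nderiv g k
      (fun y => lam (k+2) y ^ 2 * lam (k+2+1) y - lam (k+2) y * lam (k+2+1) y ^ 2) x)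
      = -(1/12) * ‖g k‖ := by
    intro k
    unfold edgeAvg
    refine (avg_segment _ _ (hpq k) (fun t => (t - 1/2) * t^2 * (-‖g k‖))
      (by fun_prop) _ ?_).trans ?_
    · intro t _
      rw [nderiv_bubble g c lam hlam (k+2) k, e21 k, hE1 k t, hE2 k t, hE0 k t, hBk k]
      ring
    · have h := intervalIntegral.integral_congr (μ := volume) (a := (0:ℝ)) (b := 1)
        (f := fun t => (t - 1/2) * t^2 * (-‖g k‖))
        (g := fun t => (0:ℝ) + 0*t + ((1/2)*‖g k‖)*t^2 + (-‖g k‖)*t^3 + 0*t^4)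
        (fun t _ => by ring)
      rw [h, poly_int]
      ring
  have HQ1 : ∀ k : Fin 3, edgeAvg a k (fun x => (1/2 - lam (k+1) x) * nderiv g k
      (fun y => lam k y * (lam 0 y * lam 1 y * lam 2 y)) x) = 0 := by
    intro k
    have hV : (fun y : Pt => lam k y * (lam 0 y * lam 1 y * lam 2 y))
        = fun y => lam k y * (lam k y * lam (k+1) y * lam (k+2) y) := by
      funext y
      rw [← cyc3 k (fun j => lam j y)]
    unfold edgeAvg
    rw [hV]
    refine (avg_segment _ _ (hpq k) (fun _ => (0:ℝ)) continuous_const _ ?_).trans ?_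
    · intro t _
      rw [nderiv_prod4 g c lam hlam k k (k+1) (k+2) k, hE0 k t, hE1 k t, hE2 k t]
      ring
    · simp
  have HQ2 : ∀ i : Fin 3, edgeAvg a (i+1) (fun x => (1/2 - lam (i+1+1) x) * nderiv g (i+1)
      (fun y => lam i y * (lam 0 y * lam 1 y * lam 2 y)) x) = -(1/120) * ‖g (i+1)‖ := by
    intro i
    have hV : (fun y : Pt => lam i y * (lam 0 y * lam 1 y * lam 2 y))
        = fun y => lam i y * (lam (i+1) y * lam (i+2) y * lam i y) := by
      funext y
      rw [← cyc3 (i+1) (fun j => lam j y), e11 i, e12 i]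
    unfold edgeAvg
    rw [hV]
    refine (avg_segment _ _ (hpq (i+1))
      (fun t => (t - 1/2) * (t^2*(1-t)) * (-‖g (i+1)‖)) (by fun_prop) _ ?_).trans ?_
    · intro t _
      have h0 := hE0 (i+1) t
      have h1 := hE1 (i+1) t
      have h2 := hE2 (i+1) t
      rw [e11 i, e12 i] at h0 h1 h2 ⊢
      rw [nderiv_prod4 g c lam hlam i (i+1) (i+2) i (i+1), h0, h1, h2, hBk (i+1)]
      ring
    · have h := intervalIntegral.integral_congr (μ := volume) (a := (0:ℝ)) (b := 1)
        (f := fun t => (t - 1/2) * (t^2*(1-t)) * (-‖g (i+1)‖))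
        (g := fun t => (0:ℝ) + 0*t + ((-1/2)*(-‖g (i+1)‖))*t^2
          + ((3/2)*(-‖g (i+1)‖))*t^3 + ((-1)*(-‖g (i+1)‖))*t^4)
        (fun t _ => by ring)
      rw [h, poly_int]
      ring
  have HQ3 : ∀ i : Fin 3, edgeAvg a (i+2) (fun x => (1/2 - lam (i+2+1) x) * nderiv g (i+2)
      (fun y => lam i y * (lam 0 y * lam 1 y * lam 2 y)) x) = (1/120) * ‖g (i+2)‖ := by
    intro i
    have hV : (fun y : Pt => lam i y * (lam 0 y * lam 1 y * lam 2 y))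
        = fun y => lam i y * (lam (i+2) y * lam i y * lam (i+1) y) := by
      funext y
      rw [← cyc3 (i+2) (fun j => lam j y), e21 i, e22 i]
    unfold edgeAvg
    rw [hV]
    refine (avg_segment _ _ (hpq (i+2))
      (fun t => (t - 1/2) * ((1-t)^2*t) * (-‖g (i+2)‖)) (by fun_prop) _ ?_).trans ?_
    · intro t _
      have h0 := hE0 (i+2) t
      have h1 := hE1 (i+2) t
      have h2 := hE2 (i+2) t
      rw [e21 i, e22 i] at h0 h1 h2 ⊢
      rw [nderiv_prod4 g c lam hlam i (i+2) i (i+1) (i+2), h0, h1, h2, hBk (i+2)]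
      ring
    · have h := intervalIntegral.integral_congr (μ := volume) (a := (0:ℝ)) (b := 1)
        (f := fun t => (t - 1/2) * ((1-t)^2*t) * (-‖g (i+2)‖))
        (g := fun t => (0:ℝ) + ((-1/2)*(-‖g (i+2)‖))*t + (2*(-‖g (i+2)‖))*t^2
          + ((-5/2)*(-‖g (i+2)‖))*t^3 + (1*(-‖g (i+2)‖))*t^4)
        (fun t _ => by ring)
      rw [h, poly_int]
      ring
  -- assembling
  intro i k
  have hcases : ∀ i k : Fin 3, i = k ∨ i = k+1 ∨ i = k+2 := by decide
  refine ⟨?_, ?_, ?_, ?_⟩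
  · rcases hcases i k with h | h | h <;> subst h
    · first | exact HB1 i | exact HB1 k
    · first | exact HB2 i | exact HB2 k
    · first | exact HB3 i | exact HB3 k
  · intro h; subst h; first | exact HQ1 i | exact HQ1 k
  · intro h; subst h; first | exact HQ2 i | exact HQ2 k
  · intro h; subst h; first | exact HQ3 i | exact HQ3 k
end
end

section
/- Surjectivity of the nine Lagrange-type degrees of freedom on cubics: the linear map P₃ → ℝ⁹ sending p to the nine values (p(a₁), p(a₂), p(a₃), ⨍_{e₁} p, ⨍_{e₂} p, ⨍_{e₃} p, ⨍_{e₁} λ₂ p, ⨍_{e₂} λ₃ p, ⨍_{e₃} λ₁ p) is surjective; equivalently, there exist ξ₁, …, ξ₉ ∈ P₃ with d_i(ξ_j) = δ_{ij} for these nine functionals d₁, …, d₉ listed in this order. -/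
open MeasureTheory
open scoped RealInnerProductSpace

noncomputable section

/-! ### Auxiliary lemmas -/


lemma segAvg (u v : Pt) (huv : u ≠ v) (f : Pt → ℝ) :
    (⨍ x in segment ℝ u v, f x ∂(μH[1])) = ∫ s in (0:ℝ)..1, f (u + s • (v - u)) := by
  set w := v - u with hwdef
  have hw : w ≠ 0 := sub_ne_zero.mpr (Ne.symm huv)
  set L : ℝ := ‖w‖ with hLdef
  have hL : 0 < L := norm_pos_iff.mpr hw
  set e : Pt := L⁻¹ • w with hedef
  have he : ‖e‖ = 1 := by
    rw [hedef, norm_smul, norm_inv, norm_norm, inv_mul_cancel₀ hL.ne']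
  set ι : ℝ → Pt := fun t => u + t • e with hιdef
  have hι : Isometry ι := by
    apply Isometry.of_dist_eq
    intro s t
    simp only [hιdef, dist_eq_norm]
    rw [add_sub_add_left_eq_sub, ← sub_smul, norm_smul, he, mul_one, Real.norm_eq_abs]
  have hιL : ∀ θ : ℝ, ι (L * θ) = u + θ • w := by
    intro θ
    simp only [hιdef, hedef, smul_smul]
    rw [mul_comm L θ, mul_assoc, mul_inv_cancel₀ hL.ne', mul_one]
  have hseg : segment ℝ u v = ι '' Set.Icc 0 L := by
    rw [segment_eq_image']
    have : Set.Icc (0:ℝ) L = (fun θ => L * θ) '' Set.Icc 0 1 := by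
      ext t
      simp only [Set.mem_image, Set.mem_Icc]
      constructor
      · intro ht
        exact ⟨t / L, ⟨div_nonneg ht.1 hL.le, (div_le_one hL).mpr ht.2⟩, by field_simp⟩
      · rintro ⟨θ, hθ, rfl⟩
        exact ⟨mul_nonneg hL.le hθ.1, by nlinarith [hθ.1, hθ.2]⟩
    rw [this, Set.image_image]
    ext x
    simp only [Set.mem_image]
    exact ⟨fun ⟨θ, h1, h2⟩ => ⟨θ, h1, by rw [hιL]; exact h2⟩,
      fun ⟨θ, h1, h2⟩ => ⟨θ, h1, by rw [hιL] at h2; exact h2⟩⟩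
  have hemb : MeasurableEmbedding ι := hι.isClosedEmbedding.measurableEmbedding
  have hmap : (μH[1] : Measure Pt).restrict (segment ℝ u v)
      = Measure.map ι (volume.restrict (Set.Icc 0 L)) := by
    ext A hA
    rw [Measure.map_apply hemb.measurable hA, Measure.restrict_apply hA,
      Measure.restrict_apply (hemb.measurable hA), hseg,
      ← Set.image_preimage_inter ι (Set.Icc 0 L) A, Set.inter_comm,
      hι.hausdorffMeasure_image (Or.inl zero_le_one), hausdorffMeasure_real]
  have hmes : (μH[1] (segment ℝ u v)).toReal = L := by
    rw [hausdorffMeasure_segment, edist_dist, ENNReal.toReal_ofReal dist_nonneg,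
      dist_eq_norm, norm_sub_rev]
  rw [setAverage_eq, measureReal_def, hmes, hmap, hemb.integral_map,
    MeasureTheory.integral_Icc_eq_integral_Ioc, ← intervalIntegral.integral_of_le hL.le]
  simp only [← hιL]
  rw [intervalIntegral.integral_comp_mul_left (fun t => f (ι t)) hL.ne', mul_zero, mul_one]

lemma int01 (c0 c1 c2 c3 c4 : ℝ) :
    (∫ s in (0:ℝ)..1, (c0 + c1*s + c2*s^2 + c3*s^3 + c4*s^4))
      = c0 + c1/2 + c2/3 + c3/4 + c4/5 := by
  have h : ∀ n : ℕ, IntervalIntegrable (fun s : ℝ => s ^ n) volume 0 1 :=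
    fun n => (continuous_pow n).intervalIntegrable 0 1
  have hc : ∀ (c : ℝ) (n : ℕ), IntervalIntegrable (fun s : ℝ => c * s ^ n) volume 0 1 :=
    fun c n => (h n).const_mul c
  have e1 : ∀ (c : ℝ) (n : ℕ), (∫ s in (0:ℝ)..1, c * s ^ n) = c / (n+1) := by
    intro c n
    rw [intervalIntegral.integral_const_mul, integral_pow]
    simp
    ring
  have expand : ∀ s : ℝ, c0 + c1*s + c2*s^2 + c3*s^3 + c4*s^4
      = c0 * s^0 + c1*s^1 + c2*s^2 + c3*s^3 + c4*s^4 := by intro s; ring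
  rw [intervalIntegral.integral_congr (fun s _ => expand s)]
  rw [intervalIntegral.integral_add (((hc c0 0).add (hc c1 1)).add ((hc c2 2)) |>.add (hc c3 3)) (hc c4 4),
    intervalIntegral.integral_add (((hc c0 0).add (hc c1 1)).add (hc c2 2)) (hc c3 3),
    intervalIntegral.integral_add ((hc c0 0).add (hc c1 1)) (hc c2 2),
    intervalIntegral.integral_add (hc c0 0) (hc c1 1), e1, e1, e1, e1, e1]
  norm_num

lemma intpoly (A B C D : ℝ) :
    (∫ s in (0:ℝ)..1, (A*(1-s) + B*s + C*((1-s)*s) + D*((1-s)*s*(1-2*s))))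
      = A/2 + B/2 + C/6 := by
  have expand : ∀ s : ℝ, A*(1-s) + B*s + C*((1-s)*s) + D*((1-s)*s*(1-2*s))
      = A + (B-A+C+D)*s + (-C-3*D)*s^2 + (2*D)*s^3 + 0*s^4 := by intro s; ring
  rw [intervalIntegral.integral_congr (fun s _ => expand s), int01]
  ring

lemma intpoly2 (A B C D : ℝ) :
    (∫ s in (0:ℝ)..1, (1-s) * (A*(1-s) + B*s + C*((1-s)*s) + D*((1-s)*s*(1-2*s))))
      = A/3 + B/6 + C/12 + D/60 := by
  have expand : ∀ s : ℝ, (1-s) * (A*(1-s) + B*s + C*((1-s)*s) + D*((1-s)*s*(1-2*s)))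
      = A + (B-2*A+C+D)*s + (A-B-2*C-4*D)*s^2 + (C+5*D)*s^3 + (-2*D)*s^4 := by intro s; ring
  rw [intervalIntegral.integral_congr (fun s _ => expand s), int01]
  ring

lemma IsPolyDeg.of_le {k l : ℕ} {p : Pt → ℝ} (h : IsPolyDeg k p) (hkl : k ≤ l) :
    IsPolyDeg l p := by
  obtain ⟨q, hq, he⟩ := h
  exact ⟨q, hq.trans hkl, he⟩

lemma isPolyDeg_const (k : ℕ) (r : ℝ) : IsPolyDeg k (fun _ => r) :=
  ⟨MvPolynomial.C r, by simp [MvPolynomial.totalDegree_C], fun x => by simp⟩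

lemma IsPolyDeg.add {k : ℕ} {p q : Pt → ℝ} (hp : IsPolyDeg k p) (hq : IsPolyDeg k q) :
    IsPolyDeg k (fun x => p x + q x) := by
  obtain ⟨P, hP, heP⟩ := hp
  obtain ⟨Q, hQ, heQ⟩ := hq
  exact ⟨P + Q, (MvPolynomial.totalDegree_add P Q).trans (max_le hP hQ),
    fun x => by simp [heP x, heQ x]⟩

lemma IsPolyDeg.mul {k l : ℕ} {p q : Pt → ℝ} (hp : IsPolyDeg k p) (hq : IsPolyDeg l q) :
    IsPolyDeg (k + l) (fun x => p x * q x) := by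
  obtain ⟨P, hP, heP⟩ := hp
  obtain ⟨Q, hQ, heQ⟩ := hq
  exact ⟨P * Q, (MvPolynomial.totalDegree_mul P Q).trans (add_le_add hP hQ),
    fun x => by simp [heP x, heQ x]⟩

lemma IsPolyDeg.sub {k : ℕ} {p q : Pt → ℝ} (hp : IsPolyDeg k p) (hq : IsPolyDeg k q) :
    IsPolyDeg k (fun x => p x - q x) := by
  obtain ⟨P, hP, heP⟩ := hp
  obtain ⟨Q, hQ, heQ⟩ := hq
  refine ⟨P - Q, ?_, fun x => by simp [heP x, heQ x]⟩
  calc (P - Q).totalDegree ≤ max P.totalDegree Q.totalDegree :=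
        MvPolynomial.totalDegree_sub P Q
    _ ≤ k := max_le hP hQ

lemma isPolyDeg_affine (g : Pt) (c : ℝ) : IsPolyDeg 1 (fun x : Pt => ⟪g, x⟫ + c) := by
  refine ⟨MvPolynomial.C (g 0) * MvPolynomial.X 0 + MvPolynomial.C (g 1) * MvPolynomial.X 1
    + MvPolynomial.C c, ?_, fun x => ?_⟩
  · refine (MvPolynomial.totalDegree_add _ _).trans (max_le ((MvPolynomial.totalDegree_add _ _).trans (max_le ?_ ?_)) (by simp [MvPolynomial.totalDegree_C])) <;>
    · refine (MvPolynomial.totalDegree_mul _ _).trans ?_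
      simp [MvPolynomial.totalDegree_C, MvPolynomial.totalDegree_X]
  · simp only [PiLp.inner_apply, Fin.sum_univ_two, RCLike.inner_apply, starRingEnd_apply,
      map_add, map_mul, MvPolynomial.eval_C, MvPolynomial.eval_X, star_trivial]
    try ring

/-- Surjectivity of the nine Lagrange-type degrees of freedom
`p ↦ (p(a₁), p(a₂), p(a₃), ⨍_{e₁} p, ⨍_{e₂} p, ⨍_{e₃} p, ⨍_{e₁} λ₂ p,
⨍_{e₂} λ₃ p, ⨍_{e₃} λ₁ p)` on the space `P₃` of cubic polynomial functions. -/
theorem cubic_lagrange_dofs_surjective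
    (a : Fin 3 → Pt) (ha : AffineIndependent ℝ a)
    (g : Fin 3 → Pt) (c : Fin 3 → ℝ) (lam : Fin 3 → Pt → ℝ)
    (hlam : ∀ i x, lam i x = ⟪g i, x⟫ + c i)
    (hdual : ∀ i j, lam i (a j) = if i = j then 1 else 0) :
    ∀ t₁ t₂ t₃ : Fin 3 → ℝ,
      ∃ p : Pt → ℝ, IsPolyDeg 3 p ∧
        (∀ i, p (a i) = t₁ i) ∧
        (∀ i, edgeAvg a i p = t₂ i) ∧
        (∀ i, edgeAvg a i (fun x => lam (i+1) x * p x) = t₃ i) := by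
  intro t₁ t₂ t₃
  have hl1 : ∀ j, IsPolyDeg 1 (lam j) := by
    intro j
    have : lam j = fun x => ⟪g j, x⟫ + c j := funext (hlam j)
    rw [this]
    exact isPolyDeg_affine (g j) (c j)
  have hline : ∀ (j : Fin 3) (u v : Pt) (s : ℝ),
      lam j (u + s • (v - u)) = (1-s) * lam j u + s * lam j v := by
    intro j u v s
    simp only [hlam, inner_add_right, real_inner_smul_right, inner_sub_right]
    ring
  have hinj := ha.injective
  have hne : ∀ i j : Fin 3, i ≠ j → a i ≠ a j := fun i j h hc => h (hinj hc)
  set β : Fin 3 → ℝ := ![6*t₂ 0 - 3*(t₁ 1 + t₁ 2), 6*t₂ 1 - 3*(t₁ 2 + t₁ 0),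
    6*t₂ 2 - 3*(t₁ 0 + t₁ 1)] with hβdef
  set γ : Fin 3 → ℝ := ![60*t₃ 0 - 20*t₁ 1 - 10*t₁ 2 - 5*β 0,
    60*t₃ 1 - 20*t₁ 2 - 10*t₁ 0 - 5*β 1, 60*t₃ 2 - 20*t₁ 0 - 10*t₁ 1 - 5*β 2] with hγdef
  have hβ0 : β 0 = 6*t₂ 0 - 3*(t₁ 1 + t₁ 2) := rfl
  have hβ1 : β 1 = 6*t₂ 1 - 3*(t₁ 2 + t₁ 0) := rfl
  have hβ2 : β 2 = 6*t₂ 2 - 3*(t₁ 0 + t₁ 1) := rfl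
  have hγ0 : γ 0 = 60*t₃ 0 - 20*t₁ 1 - 10*t₁ 2 - 5*β 0 := rfl
  have hγ1 : γ 1 = 60*t₃ 1 - 20*t₁ 2 - 10*t₁ 0 - 5*β 1 := rfl
  have hγ2 : γ 2 = 60*t₃ 2 - 20*t₁ 0 - 10*t₁ 1 - 5*β 2 := rfl
  set p : Pt → ℝ := fun x =>
    t₁ 0 * lam 0 x + t₁ 1 * lam 1 x + t₁ 2 * lam 2 x
    + β 0 * (lam 1 x * lam 2 x) + β 1 * (lam 2 x * lam 0 x) + β 2 * (lam 0 x * lam 1 x)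
    + γ 0 * (lam 1 x * lam 2 x * (lam 1 x - lam 2 x))
    + γ 1 * (lam 2 x * lam 0 x * (lam 2 x - lam 0 x))
    + γ 2 * (lam 0 x * lam 1 x * (lam 0 x - lam 1 x)) with hpdef
  have h3 : ∀ (r : ℝ) (j : Fin 3), IsPolyDeg 3 (fun x => r * lam j x) :=
    fun r j => ((isPolyDeg_const 0 r).mul (hl1 j)).of_le (by norm_num)
  have h32 : ∀ (r : ℝ) (j k : Fin 3), IsPolyDeg 3 (fun x => r * (lam j x * lam k x)) :=
    fun r j k => ((isPolyDeg_const 0 r).mul ((hl1 j).mul (hl1 k))).of_le (by norm_num)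
  have h33 : ∀ (r : ℝ) (j k : Fin 3),
      IsPolyDeg 3 (fun x => r * (lam j x * lam k x * (lam j x - lam k x))) :=
    fun r j k => ((isPolyDeg_const 0 r).mul
      (((hl1 j).mul (hl1 k)).mul ((hl1 j).sub (hl1 k)))).of_le (by norm_num)
  refine ⟨p, ?_, ?_, ?_, ?_⟩
  · exact (((((((((h3 (t₁ 0) 0).add (h3 (t₁ 1) 1)).add (h3 (t₁ 2) 2)).add
      (h32 (β 0) 1 2)).add (h32 (β 1) 2 0)).add (h32 (β 2) 0 1)).add
      (h33 (γ 0) 1 2)).add (h33 (γ 1) 2 0)).add (h33 (γ 2) 0 1))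
  · intro i
    fin_cases i <;> simp [hpdef, hdual]
  · intro i
    fin_cases i
    · show (⨍ x in segment ℝ (a 1) (a 2), p x ∂(μH[1])) = t₂ 0
      rw [segAvg (a 1) (a 2) (hne 1 2 (by decide)) p]
      have key : ∀ s : ℝ, p (a 1 + s • (a 2 - a 1))
          = t₁ 1*(1-s) + t₁ 2*s + β 0*((1-s)*s) + γ 0*((1-s)*s*(1-2*s)) := by
        intro s
        simp only [hpdef, hline]
        simp only [hdual, Fin.reduceEq, if_true, if_false, reduceIte, mul_zero, zero_mul,
          mul_one, one_mul, add_zero, zero_add, sub_zero, zero_sub]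
        ring
      rw [intervalIntegral.integral_congr (fun s _ => key s), intpoly]
      simp only [hβ0, hβ1, hβ2]
      ring
    · show (⨍ x in segment ℝ (a 2) (a 0), p x ∂(μH[1])) = t₂ 1
      rw [segAvg (a 2) (a 0) (hne 2 0 (by decide)) p]
      have key : ∀ s : ℝ, p (a 2 + s • (a 0 - a 2))
          = t₁ 2*(1-s) + t₁ 0*s + β 1*((1-s)*s) + γ 1*((1-s)*s*(1-2*s)) := by
        intro s
        simp only [hpdef, hline]
        simp only [hdual, Fin.reduceEq, if_true, if_false, reduceIte, mul_zero, zero_mul,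
          mul_one, one_mul, add_zero, zero_add, sub_zero, zero_sub]
        ring
      rw [intervalIntegral.integral_congr (fun s _ => key s), intpoly]
      simp only [hβ0, hβ1, hβ2]
      ring
    · show (⨍ x in segment ℝ (a 0) (a 1), p x ∂(μH[1])) = t₂ 2
      rw [segAvg (a 0) (a 1) (hne 0 1 (by decide)) p]
      have key : ∀ s : ℝ, p (a 0 + s • (a 1 - a 0))
          = t₁ 0*(1-s) + t₁ 1*s + β 2*((1-s)*s) + γ 2*((1-s)*s*(1-2*s)) := by
        intro s
        simp only [hpdef, hline]
        simp only [hdual, Fin.reduceEq, if_true, if_false, reduceIte, mul_zero, zero_mul,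
          mul_one, one_mul, add_zero, zero_add, sub_zero, zero_sub]
        ring
      rw [intervalIntegral.integral_congr (fun s _ => key s), intpoly]
      simp only [hβ0, hβ1, hβ2]
      ring
  · intro i
    fin_cases i
    · show (⨍ x in segment ℝ (a 1) (a 2), lam 1 x * p x ∂(μH[1])) = t₃ 0
      rw [segAvg (a 1) (a 2) (hne 1 2 (by decide)) _]
      have key : ∀ s : ℝ, lam 1 (a 1 + s • (a 2 - a 1)) * p (a 1 + s • (a 2 - a 1))
          = (1-s) * (t₁ 1*(1-s) + t₁ 2*s + β 0*((1-s)*s) + γ 0*((1-s)*s*(1-2*s))) := by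
        intro s
        simp only [hpdef, hline]
        simp only [hdual, Fin.reduceEq, if_true, if_false, reduceIte, mul_zero, zero_mul,
          mul_one, one_mul, add_zero, zero_add, sub_zero, zero_sub]
        ring
      rw [intervalIntegral.integral_congr (fun s _ => key s), intpoly2]
      simp only [hγ0, hγ1, hγ2, hβ0, hβ1, hβ2]
      ring
    · show (⨍ x in segment ℝ (a 2) (a 0), lam 2 x * p x ∂(μH[1])) = t₃ 1
      rw [segAvg (a 2) (a 0) (hne 2 0 (by decide)) _]
      have key : ∀ s : ℝ, lam 2 (a 2 + s • (a 0 - a 2)) * p (a 2 + s • (a 0 - a 2))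
          = (1-s) * (t₁ 2*(1-s) + t₁ 0*s + β 1*((1-s)*s) + γ 1*((1-s)*s*(1-2*s))) := by
        intro s
        simp only [hpdef, hline]
        simp only [hdual, Fin.reduceEq, if_true, if_false, reduceIte, mul_zero, zero_mul,
          mul_one, one_mul, add_zero, zero_add, sub_zero, zero_sub]
        ring
      rw [intervalIntegral.integral_congr (fun s _ => key s), intpoly2]
      simp only [hγ0, hγ1, hγ2, hβ0, hβ1, hβ2]
      ring
    · show (⨍ x in segment ℝ (a 0) (a 1), lam 0 x * p x ∂(μH[1])) = t₃ 2
      rw [segAvg (a 0) (a 1) (hne 0 1 (by decide)) _]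
      have key : ∀ s : ℝ, lam 0 (a 0 + s • (a 1 - a 0)) * p (a 0 + s • (a 1 - a 0))
          = (1-s) * (t₁ 0*(1-s) + t₁ 1*s + β 2*((1-s)*s) + γ 2*((1-s)*s*(1-2*s))) := by
        intro s
        simp only [hpdef, hline]
        simp only [hdual, Fin.reduceEq, if_true, if_false, reduceIte, mul_zero, zero_mul,
          mul_one, one_mul, add_zero, zero_add, sub_zero, zero_sub]
        ring
      rw [intervalIntegral.integral_congr (fun s _ => key s), intpoly2]
      simp only [hγ0, hγ1, hγ2, hβ0, hβ1, hβ2]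
      ring
end
end
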